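/- arXiv:1102.2350 — 7 statements merged into one kernel-verified Lean document; each statement's English description precedes it below -/
import Mathlib

section
/- If C is a linear [n,k;q] code of full support, then for all z ∈ [0,1], the weight distribution function satisfies A_C(z) ≤ (1 + (q-1)z)^{k-1} (1 + (q-1) z^{n-k+1}). -/
open scoped Classical

set_option linter.unusedSectionVars false

open Finset Module

section Aux

variable {F : Type*} [Field F] [Fintype F]

/-- helper factor: `phiF z a = 1` if `a = 0` else `z`. -/
noncomputable def phiF (z : ℝ) (a : F) : ℝ := if a = 0 then 1 else z

lemma phiF_nonneg {z : ℝ} (hz : 0 ≤ z) (a : F) : 0 ≤ phiF z a := by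
  unfold phiF; split
  · norm_num
  · exact hz

lemma phiF_le_one {z : ℝ} (hz : z ≤ 1) (a : F) : phiF z a ≤ 1 := by
  unfold phiF; split
  · norm_num
  · exact hz

lemma pow_hammingNorm_eq (z : ℝ) {m : ℕ} (v : Fin m → F) :
    z ^ hammingNorm v = ∏ i, phiF z (v i) := by
  unfold phiF
  rw [Finset.prod_ite, Finset.prod_const, Finset.prod_const, one_pow, one_mul]
  congr 1

lemma sum_phiF (z : ℝ) : ∑ a : F, phiF z a = 1 + ((Fintype.card F : ℝ) - 1) * z := by
  have h : ∀ a : F, phiF z a = (if a = 0 then (1 - z : ℝ) else 0) + z := by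
    intro a; unfold phiF; split <;> ring
  rw [Finset.sum_congr rfl fun a _ => h a, Finset.sum_add_distrib,
    Finset.sum_ite_eq' Finset.univ (0 : F) (fun _ => (1 - z : ℝ)), Finset.sum_const]
  simp only [Finset.mem_univ, if_true, Finset.card_univ, nsmul_eq_mul]
  ring

end Aux
section Aux2

variable {F : Type*} [Field F] [Fintype F]
variable {M : Type*} [AddCommGroup M] [Module F M]
variable {N : Type*} [AddCommGroup N] [Module F N]

lemma injOn_comp_subtype (f : M →ₗ[F] N) (D : Submodule F M)
    (hf : ∀ c ∈ D, f c = 0 → c = 0) :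
    Function.Injective (f ∘ₗ D.subtype) := by
  intro a b hab
  have h : f ((a : M) - b) = 0 := by
    rw [map_sub, sub_eq_zero]; exact hab
  have := hf ((a : M) - b) (sub_mem a.2 b.2) h
  exact Subtype.ext (sub_eq_zero.mp this)

lemma sum_map_injOn (f : M →ₗ[F] N) (D : Submodule F M) [Fintype D] [Fintype (D.map f)]
    (hf : ∀ c ∈ D, f c = 0 → c = 0) (g : N → ℝ) :
    ∑ c : D, g (f (c : M)) = ∑ d : D.map f, g (d : N) := by
  have hinj := injOn_comp_subtype f D hf
  refine Fintype.sum_bijective (fun c : D => (⟨f (c : M), Submodule.mem_map_of_mem c.2⟩ : D.map f))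
    ⟨?_, ?_⟩ _ _ (fun c => rfl)
  · intro a b hab
    exact hinj (Subtype.ext_iff.mp hab)
  · rintro ⟨d, hd⟩
    obtain ⟨c, hc, rfl⟩ := hd
    exact ⟨⟨c, hc⟩, rfl⟩

lemma finrank_map_injOn (f : M →ₗ[F] N) (D : Submodule F M)
    (hf : ∀ c ∈ D, f c = 0 → c = 0) :
    finrank F (D.map f) = finrank F D := by
  have hinj := injOn_comp_subtype f D hf
  have h1 : finrank F (LinearMap.range (f ∘ₗ D.subtype)) = finrank F D :=
    (LinearEquiv.ofInjective _ hinj).finrank_eq.symm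
  rwa [LinearMap.range_comp, Submodule.range_subtype] at h1

lemma sum_decomp {V : Type*} [AddCommGroup V] [Module F V] [Fintype V]
    (ev : V →ₗ[F] F) (u : V) (hu : ev u = 1) (g : V → ℝ) :
    ∑ v : V, g v = ∑ α : F, ∑ d : LinearMap.ker ev, g (α • u + (d : V)) := by
  let e : F × LinearMap.ker ev ≃ V :=
    { toFun := fun p => p.1 • u + (p.2 : V)
      invFun := fun v => (ev v, ⟨v - ev v • u, by simp [hu]⟩)
      left_inv := by
        rintro ⟨α, d, hd⟩
        have hd' : ev d = 0 := hd
        ext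
        · simp [hu, hd']
        · simp [hu, hd']
      right_inv := by intro v; simp [hu] }
  rw [← Equiv.sum_comp e g, Fintype.sum_prod_type]
  rfl

lemma finrank_ker_add_one {V : Type*} [AddCommGroup V] [Module F V] [FiniteDimensional F V]
    (ev : V →ₗ[F] F) (u : V) (hu : ev u = 1) :
    finrank F (LinearMap.ker ev) + 1 = finrank F V := by
  have hsurj : Function.Surjective ev := fun α => ⟨α • u, by simp [hu]⟩
  have h := LinearMap.finrank_range_add_finrank_ker ev
  rw [LinearMap.range_eq_top.mpr hsurj, finrank_top, Module.finrank_self] at h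
  omega

end Aux2

section Coset

variable {F : Type*} [Field F] [Fintype F]

lemma one_le_base {z : ℝ} (hz0 : 0 ≤ z) : (1:ℝ) ≤ 1 + ((Fintype.card F : ℝ) - 1) * z := by
  have h1 : (1:ℝ) ≤ (Fintype.card F : ℝ) := by
    exact_mod_cast Fintype.card_pos
  nlinarith

lemma coset_sum_le {z : ℝ} (hz0 : 0 ≤ z) (hz1 : z ≤ 1) :
    ∀ (m : ℕ) (D : Submodule F (Fin m → F)) (x : Fin m → F),
      ∑ c : D, ∏ i, phiF z ((x + (c : Fin m → F)) i) ≤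
        (1 + ((Fintype.card F : ℝ) - 1) * z) ^ finrank F D := by
  intro m
  induction m with
  | zero =>
    intro D x
    have hsub : Subsingleton D := ⟨fun a b => Subtype.ext (Subsingleton.elim _ _)⟩
    have hrk : finrank F D = 0 := finrank_zero_of_subsingleton
    have hcard : Fintype.card D = 1 :=
      Fintype.card_eq_one_iff.mpr ⟨0, fun c => Subsingleton.elim _ _⟩
    rw [hrk, pow_zero]
    simp [hcard]
  | succ m ihm =>
    intro D x
    set Q : ℝ := 1 + ((Fintype.card F : ℝ) - 1) * z with hQ
    have hQ0 : (0:ℝ) ≤ Q := le_trans zero_le_one (one_le_base hz0)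
    set initL : (Fin (m+1) → F) →ₗ[F] (Fin m → F) := LinearMap.funLeft F F Fin.castSucc with hinitL
    have hsplit : ∀ (w : Fin (m+1) → F),
        ∏ i, phiF z (w i) = (∏ i, phiF z (initL w i)) * phiF z (w (Fin.last m)) := by
      intro w
      rw [Fin.prod_univ_castSucc]
      rfl
    have hzero : ∀ c : Fin (m+1) → F, initL c = 0 → c (Fin.last m) = 0 → c = 0 := by
      intro c h1 h2
      funext j
      induction j using Fin.lastCases with
      | last => exact h2
      | cast j => exact congrFun h1 j
    by_cases hcase : ∀ c ∈ D, c (Fin.last m) = 0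
    · -- all codewords vanish at the last coordinate
      have hinj : ∀ c ∈ D, initL c = 0 → c = 0 := fun c hc h => hzero c h (hcase c hc)
      have hterm : ∀ c : D, ∏ i, phiF z ((x + (c : Fin (m+1) → F)) i) ≤
          ∏ i, phiF z ((initL x + initL (c : Fin (m+1) → F)) i) := by
        intro c
        rw [hsplit]
        have h1 : initL (x + (c : Fin (m+1) → F)) = initL x + initL (c : Fin (m+1) → F) :=
          map_add _ _ _
        rw [h1]
        have h2 : (0:ℝ) ≤ ∏ i, phiF z ((initL x + initL (c : Fin (m+1) → F)) i) :=
          Finset.prod_nonneg fun i _ => phiF_nonneg hz0 _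
        nlinarith [phiF_le_one hz1 ((x + (c : Fin (m+1) → F)) (Fin.last m)),
          phiF_nonneg hz0 ((x + (c : Fin (m+1) → F)) (Fin.last m))]
      calc ∑ c : D, ∏ i, phiF z ((x + (c : Fin (m+1) → F)) i)
          ≤ ∑ c : D, ∏ i, phiF z ((initL x + initL (c : Fin (m+1) → F)) i) :=
            Finset.sum_le_sum fun c _ => hterm c
        _ = ∑ d : D.map initL, ∏ i, phiF z ((initL x + (d : Fin m → F)) i) :=
            sum_map_injOn initL D hinj (fun w => ∏ i, phiF z ((initL x + w) i))
        _ ≤ Q ^ finrank F (D.map initL) := ihm (D.map initL) (initL x)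
        _ = Q ^ finrank F D := by rw [finrank_map_injOn initL D hinj]
    · -- some codeword is nonzero at the last coordinate
      push_neg at hcase
      obtain ⟨c₀, hc₀D, hc₀⟩ := hcase
      set u : Fin (m+1) → F := (c₀ (Fin.last m))⁻¹ • c₀ with hu
      have huD : u ∈ D := Submodule.smul_mem _ _ hc₀D
      have hulast : u (Fin.last m) = 1 := by
        simp [hu, inv_mul_cancel₀ hc₀]
      set ev : D →ₗ[F] F := (LinearMap.proj (Fin.last m)).comp D.subtype with hev
      have hevu : ev (⟨u, huD⟩ : D) = 1 := hulast
      set K := LinearMap.ker ev with hK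
      set f : D →ₗ[F] (Fin m → F) := initL.comp D.subtype with hf
      have hfinj : ∀ c ∈ K, f c = 0 → c = 0 := by
        intro c hc h
        have hlast : (c : Fin (m+1) → F) (Fin.last m) = 0 := hc
        exact Subtype.ext (hzero _ h hlast)
      have hrkK : finrank F K + 1 = finrank F D := finrank_ker_add_one ev ⟨u, huD⟩ hevu
      have hrkKf : finrank F (K.map f) = finrank F K := finrank_map_injOn f K hfinj
      rw [sum_decomp ev ⟨u, huD⟩ hevu]
      have hbound : ∀ α : F,
          ∑ d : K, ∏ i, phiF z ((x + ((α • (⟨u, huD⟩ : D) + (d : D) : D) : Fin (m+1) → F)) i)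
            ≤ phiF z (x (Fin.last m) + α) * Q ^ finrank F K := by
        intro α
        have hterm : ∀ d : K,
            ∏ i, phiF z ((x + ((α • (⟨u, huD⟩ : D) + (d : D) : D) : Fin (m+1) → F)) i)
              = phiF z (x (Fin.last m) + α) *
                ∏ i, phiF z (((initL x + α • initL u) + f (d : D)) i) := by
          intro d
          have hdlast : ((d : D) : Fin (m+1) → F) (Fin.last m) = 0 := d.2
          have hcoe : ((α • (⟨u, huD⟩ : D) + (d : D) : D) : Fin (m+1) → F)
              = α • u + ((d : D) : Fin (m+1) → F) := rfl
          rw [hcoe, hsplit]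
          have h1 : initL (x + (α • u + ((d : D) : Fin (m+1) → F)))
              = (initL x + α • initL u) + f (d : D) := by
            simp only [map_add, map_smul]
            exact (add_assoc _ _ _).symm
          have h2 : (x + (α • u + ((d : D) : Fin (m+1) → F))) (Fin.last m)
              = x (Fin.last m) + α := by
            simp [hulast, hdlast]
          rw [h1, h2, mul_comm]
        calc ∑ d : K, ∏ i, phiF z ((x + ((α • (⟨u, huD⟩ : D) + (d : D) : D) : Fin (m+1) → F)) i)
            = phiF z (x (Fin.last m) + α) *
              ∑ d : K, ∏ i, phiF z (((initL x + α • initL u) + f (d : D)) i) := by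
              rw [Finset.mul_sum]
              exact Finset.sum_congr rfl fun d _ => hterm d
          _ ≤ phiF z (x (Fin.last m) + α) * Q ^ finrank F K := by
              refine mul_le_mul_of_nonneg_left ?_ (phiF_nonneg hz0 _)
              rw [← hrkKf]
              rw [sum_map_injOn f K hfinj (fun w => ∏ i, phiF z (((initL x + α • initL u) + w) i))]
              exact ihm (K.map f) (initL x + α • initL u)
      calc ∑ α : F, ∑ d : K, ∏ i, phiF z ((x + ((α • (⟨u, huD⟩ : D) + (d : D) : D) : Fin (m+1) → F)) i)
          ≤ ∑ α : F, phiF z (x (Fin.last m) + α) * Q ^ finrank F K :=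
            Finset.sum_le_sum fun α _ => hbound α
        _ = (∑ α : F, phiF z (x (Fin.last m) + α)) * Q ^ finrank F K := by
            rw [Finset.sum_mul]
        _ = Q * Q ^ finrank F K := by
            congr 1
            have h := Equiv.sum_comp (Equiv.addLeft (x (Fin.last m))) (phiF z)
            calc ∑ α : F, phiF z (x (Fin.last m) + α) = ∑ a : F, phiF z a := h
              _ = Q := by rw [sum_phiF]
        _ = Q ^ finrank F D := by rw [← hrkK, pow_succ, mul_comm]

end Coset

/-- Weight distribution function `A_C(z) = Σ_{c ∈ C} z^{wt(c)}`. -/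
noncomputable def weightEnum {F : Type*} [Field F] [Fintype F] {n : ℕ}
    (C : Submodule F (Fin n → F)) (z : ℝ) : ℝ :=
  ∑ c : C, z ^ hammingNorm (c : Fin n → F)

/-- If `C` is an `[n,k;q]` code of full support, then for all `z ∈ [0,1]`,
`A_C(z) ≤ (1+(q-1)z)^{k-1}(1+(q-1)z^{n-k+1})`. -/
theorem weightEnum_le_full_support_bound {F : Type*} [Field F] [Fintype F] {n k q : ℕ}
    (hq : Fintype.card F = q) (hk : 1 ≤ k) (hkn : k ≤ n)
    (C : Submodule F (Fin n → F)) (hdim : Module.finrank F C = k)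
    (hfull : ∀ i : Fin n, ∃ c ∈ C, c i ≠ 0) :
    ∀ z : ℝ, 0 ≤ z → z ≤ 1 →
      weightEnum C z ≤
        (1 + ((q : ℝ) - 1) * z) ^ (k - 1) * (1 + ((q : ℝ) - 1) * z ^ (n - k + 1)) := by
  subst hq
  induction n, hkn using Nat.le_induction with
  | base =>
    intro z hz0 hz1
    have h := coset_sum_le hz0 hz1 k C 0
    rw [hdim] at h
    have heq : weightEnum C z = ∑ c : C, ∏ i, phiF z (((0 : Fin k → F) + (c : Fin k → F)) i) := by
      unfold weightEnum
      refine Finset.sum_congr rfl fun c _ => ?_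
      rw [zero_add, pow_hammingNorm_eq]
    rw [heq]
    refine le_trans h (le_of_eq ?_)
    have hk1 : k - 1 + 1 = k := Nat.succ_pred_eq_of_pos hk
    rw [Nat.sub_self, zero_add, pow_one, ← pow_succ, hk1]
  | succ n hkn ih =>
    intro z hz0 hz1
    set Q : ℝ := 1 + ((Fintype.card F : ℝ) - 1) * z with hQdef
    -- find a good coordinate
    have hgood : ∃ i : Fin (n+1), ∀ c ∈ C, (∀ j, j ≠ i → c j = 0) → c = 0 := by
      by_contra hcon
      push_neg at hcon
      have hsingle : ∀ i : Fin (n+1), Pi.single i (1:F) ∈ C := by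
        intro i
        obtain ⟨c, hcC, hcz, hcne⟩ := hcon i
        have hci : c i ≠ 0 := by
          intro h0
          apply hcne
          funext j
          by_cases hj : j = i
          · rw [hj]; exact h0
          · exact hcz j hj
        have : Pi.single i (1:F) = (c i)⁻¹ • c := by
          funext j
          by_cases hj : j = i
          · subst hj
            simp [Pi.single_eq_same, inv_mul_cancel₀ hci]
          · simp [Pi.single_eq_of_ne hj, hcz j hj]
        rw [this]
        exact Submodule.smul_mem _ _ hcC
      have htop : C = ⊤ := by
        rw [Submodule.eq_top_iff']
        intro v
        have hv : v = ∑ j, (v j) • (Pi.single j (1:F) : Fin (n+1) → F) := by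
          conv_lhs => rw [← Finset.univ_sum_single v]
          refine Finset.sum_congr rfl fun j _ => ?_
          funext t
          by_cases ht : t = j
          · subst ht; simp
          · simp [Pi.single_eq_of_ne ht]
        rw [hv]
        exact Submodule.sum_mem _ fun j _ => Submodule.smul_mem _ _ (hsingle j)
      have hrk : Module.finrank F C = n + 1 := by
        rw [htop, finrank_top, Module.finrank_fin_fun]
      omega
    obtain ⟨i, hi⟩ := hgood
    set π : (Fin (n+1) → F) →ₗ[F] (Fin n → F) := LinearMap.funLeft F F i.succAbove with hπdef
    have hπinj : ∀ c ∈ C, π c = 0 → c = 0 := by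
      intro c hc h0
      apply hi c hc
      intro j hj
      obtain ⟨t, ht⟩ := Fin.exists_succAbove_eq hj
      rw [← ht]
      exact congrFun h0 t
    -- split off coordinate i
    have hsplit : ∀ (w : Fin (n+1) → F),
        ∏ j, phiF z (w j) = phiF z (w i) * ∏ j, phiF z (π w j) := by
      intro w
      rw [Fin.prod_univ_succAbove (fun j => phiF z (w j)) i]
      rfl
    -- the element u ∈ C with u i = 1
    obtain ⟨c₀, hc₀C, hc₀⟩ := hfull i
    set u : Fin (n+1) → F := (c₀ i)⁻¹ • c₀ with hu
    have huC : u ∈ C := Submodule.smul_mem _ _ hc₀C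
    have hui : u i = 1 := by simp [hu, inv_mul_cancel₀ hc₀]
    set ev : C →ₗ[F] F := (LinearMap.proj i).comp C.subtype with hev
    have hevu : ev (⟨u, huC⟩ : C) = 1 := hui
    set K := LinearMap.ker ev with hK
    set f : C →ₗ[F] (Fin n → F) := π.comp C.subtype with hf
    have hfinj : ∀ c ∈ K, f c = 0 → c = 0 := by
      intro c _ h
      exact Subtype.ext (hπinj _ c.2 h)
    have hrkK : Module.finrank F K + 1 = k := by
      rw [← hdim]
      exact finrank_ker_add_one ev ⟨u, huC⟩ hevu
    -- T α
    set T : F → ℝ := fun α => ∑ d : K, ∏ j, phiF z ((π (α • u) + f ((d : C) : C)) j) with hT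
    -- main identity
    have hAC : weightEnum C z = ∑ α : F, phiF z α * T α := by
      unfold weightEnum
      have h1 : ∀ c : C, z ^ hammingNorm ((c : Fin (n+1) → F)) =
          ∏ j, phiF z ((c : Fin (n+1) → F) j) := fun c => pow_hammingNorm_eq z _
      rw [Finset.sum_congr rfl fun c _ => h1 c]
      rw [sum_decomp ev ⟨u, huC⟩ hevu (fun c : C => ∏ j, phiF z ((c : Fin (n+1) → F) j))]
      refine Finset.sum_congr rfl fun α _ => ?_
      rw [hT, Finset.mul_sum]
      refine Finset.sum_congr rfl fun d _ => ?_
      have hcoe : ((α • (⟨u, huC⟩ : C) + (d : C) : C) : Fin (n+1) → F)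
          = α • u + ((d : C) : Fin (n+1) → F) := rfl
      rw [hcoe, hsplit]
      have hdi : ((d : C) : Fin (n+1) → F) i = 0 := d.2
      have h2 : (α • u + ((d : C) : Fin (n+1) → F)) i = α := by
        simp [hui, hdi]
      rw [h2]
      have h3 : π (α • u + ((d : C) : Fin (n+1) → F)) = π (α • u) + f (d : C) := by
        rw [map_add]; rfl
      rw [h3]
    -- S = weightEnum of punctured code
    set C' := C.map π with hC'
    have hS : ∑ α : F, T α = weightEnum C' z := by
      have h0 : weightEnum C' z = ∑ d : C', ∏ j, phiF z ((d : Fin n → F) j) := by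
        unfold weightEnum
        exact Finset.sum_congr rfl fun d _ => pow_hammingNorm_eq z _
      rw [h0, ← sum_map_injOn π C hπinj (fun w => ∏ j, phiF z (w j))]
      rw [sum_decomp ev ⟨u, huC⟩ hevu (fun c : C => ∏ j, phiF z (π (c : Fin (n+1) → F) j))]
      refine Finset.sum_congr rfl fun α _ => ?_
      rw [hT]
      refine Finset.sum_congr rfl fun d _ => ?_
      have : π ((α • (⟨u, huC⟩ : C) + (d : C) : C) : Fin (n+1) → F)
          = π (α • u) + f (d : C) := by
        have hcoe : ((α • (⟨u, huC⟩ : C) + (d : C) : C) : Fin (n+1) → F)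
            = α • u + ((d : C) : Fin (n+1) → F) := rfl
        rw [hcoe, map_add]; rfl
      rw [this]
    -- bound on T 0
    have hT0 : T 0 ≤ Q ^ (k - 1) := by
      have hz' : π ((0:F) • u) = 0 := by rw [zero_smul, map_zero]
      have h1 : T 0 = ∑ d : K.map f, ∏ j, phiF z (((0:Fin n → F) + (d : Fin n → F)) j) := by
        rw [hT, ← sum_map_injOn f K hfinj (fun w => ∏ j, phiF z (((0:Fin n → F) + w) j))]
        refine Finset.sum_congr rfl fun d _ => ?_
        rw [hz']
      rw [h1]
      have h2 := coset_sum_le hz0 hz1 n (K.map f) 0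
      rw [finrank_map_injOn f K hfinj] at h2
      have h3 : Module.finrank F K = k - 1 := by omega
      rw [h3] at h2
      exact h2
    -- bound on S via induction hypothesis
    have hfull' : ∀ j : Fin n, ∃ c ∈ C', c j ≠ 0 := by
      intro j
      obtain ⟨c, hcC, hcne⟩ := hfull (i.succAbove j)
      exact ⟨π c, Submodule.mem_map_of_mem hcC, hcne⟩
    have hdim' : Module.finrank F C' = k := by
      rw [hC', finrank_map_injOn π C hπinj, hdim]
    have hSb : weightEnum C' z ≤ Q ^ (k - 1) * (1 + ((Fintype.card F : ℝ) - 1) * z ^ (n - k + 1)) :=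
      ih C' hdim' hfull' z hz0 hz1
    -- nonnegativity of T
    have hTnn : ∀ α : F, 0 ≤ T α := by
      intro α
      rw [hT]
      exact Finset.sum_nonneg fun d _ =>
        Finset.prod_nonneg fun j _ => phiF_nonneg hz0 _
    -- combine
    have hphi : ∀ α : F, phiF z α = (if α = 0 then (1 - z : ℝ) else 0) + z := by
      intro α; unfold phiF; split <;> ring
    have hAC2 : weightEnum C z = (1 - z) * T 0 + z * (∑ α : F, T α) := by
      rw [hAC, Finset.sum_congr rfl fun α _ => by rw [hphi α]]
      have : ∀ α : F, ((if α = 0 then (1 - z : ℝ) else 0) + z) * T α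
          = (if α = 0 then (1 - z) * T α else 0) + z * T α := by
        intro α; split <;> ring
      rw [Finset.sum_congr rfl fun α _ => this α, Finset.sum_add_distrib,
        Finset.sum_ite_eq' Finset.univ (0 : F) (fun α => (1 - z) * T α), ← Finset.mul_sum]
      simp
    rw [hAC2, hS]
    have h1z : (0:ℝ) ≤ 1 - z := by linarith
    have hQk : (0:ℝ) ≤ Q ^ (k-1) := pow_nonneg (le_trans zero_le_one (one_le_base hz0)) _
    calc (1 - z) * T 0 + z * weightEnum C' z
        ≤ (1 - z) * Q ^ (k-1) + z * (Q ^ (k - 1) * (1 + ((Fintype.card F : ℝ) - 1) * z ^ (n - k + 1))) := by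
          have := mul_le_mul_of_nonneg_left hT0 h1z
          have := mul_le_mul_of_nonneg_left hSb hz0
          linarith
      _ = Q ^ (k - 1) * (1 + ((Fintype.card F : ℝ) - 1) * z ^ (n + 1 - k + 1)) := by
          have hexp : n + 1 - k + 1 = (n - k + 1) + 1 := by omega
          rw [hexp, pow_succ]
          ring
end

section
/- If C is a linear [n,k;q] code with minimum distance at least 2 (every nonzero codeword has Hamming weight at least 2), then for all z ∈ [0,1], A_C(z) ≤ f(z), where f(z) = (1/q)[(1+(q-1)z)^{k+1} + (q-1)(1-z)^{k+1}]. -/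
open scoped Classical

namespace WeightEnumAux

set_option linter.unusedSectionVars false
set_option maxHeartbeats 1000000

variable {F : Type*} [Field F] [Fintype F] {n : ℕ}


lemma hammingNorm_update_add_one {x : Fin n → F} {i : Fin n} (hx : x i ≠ 0) :
    hammingNorm x = hammingNorm (Function.update x i 0) + 1 := by
  have h1 : (Finset.univ.filter fun j => Function.update x i 0 j ≠ 0) =
      (Finset.univ.filter fun j => x j ≠ 0).erase i := by
    ext j
    by_cases hj : j = i
    · subst hj; simp
    · simp [Function.update_of_ne hj, hj]
  have hi : i ∈ (Finset.univ.filter fun j => x j ≠ 0) := by simp [hx]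
  have hpos : 0 < (Finset.univ.filter fun j => x j ≠ 0).card := Finset.card_pos.mpr ⟨i, hi⟩
  show (Finset.univ.filter fun j => x j ≠ 0).card
      = (Finset.univ.filter fun j => Function.update x i 0 j ≠ 0).card + 1
  rw [h1, Finset.card_erase_of_mem hi]
  omega

lemma hammingNorm_le_one {u : Fin n → F} {i : Fin n} (h : ∀ j, j ≠ i → u j = 0) :
    hammingNorm u ≤ 1 := by
  have hsub : (Finset.univ.filter fun j => u j ≠ 0) ⊆ {i} := by
    intro j hj
    simp only [Finset.mem_filter, Finset.mem_univ, true_and] at hj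
    simp only [Finset.mem_singleton]
    by_contra hji
    exact hj (h j hji)
  calc (Finset.univ.filter fun j => u j ≠ 0).card ≤ ({i} : Finset (Fin n)).card :=
        Finset.card_le_card hsub
    _ = 1 := Finset.card_singleton i

lemma update_add_eq {x y : Fin n → F} {i : Fin n} (hy : y i = 0) :
    Function.update (x + y) i 0 = Function.update x i 0 + y := by
  funext j
  by_cases hj : j = i
  · subst hj; simp [hy]
  · simp [Function.update_of_ne hj]

lemma no_weight_one {D : Submodule F (Fin n → F)}
    (hmin : ∀ c ∈ D, c ≠ 0 → 2 ≤ hammingNorm c) {u : Fin n → F} (hu : u ∈ D)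
    {i : Fin n} (hui : u i ≠ 0) (hj : ∀ j, j ≠ i → u j = 0) : False := by
  have h2 := hmin u hu (fun h0 => hui (by rw [h0]; rfl))
  have h1 := hammingNorm_le_one hj
  omega

lemma sum_decomp (D : Submodule F (Fin n → F)) {v : Fin n → F} (hvD : v ∈ D)
    {i : Fin n} (hvi : v i = 1) (f : (Fin n → F) → ℝ) :
    ∑ c : D, f (c : Fin n → F)
      = ∑ l : F, ∑ c : (D ⊓ LinearMap.ker (LinearMap.proj i) : Submodule F (Fin n → F)),
          f (l • v + (c : Fin n → F)) := by
  set D₀ : Submodule F (Fin n → F) := D ⊓ LinearMap.ker (LinearMap.proj i) with hD₀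
  have hmem : ∀ x : Fin n → F, x ∈ D₀ ↔ x ∈ D ∧ x i = 0 := by
    intro x; simp [hD₀, Submodule.mem_inf, LinearMap.mem_ker]
  let e : F × D₀ ≃ D :=
    { toFun := fun p => ⟨p.1 • v + p.2.1, D.add_mem (D.smul_mem _ hvD) ((hmem _).mp p.2.2).1⟩
      invFun := fun d => (d.1 i, ⟨d.1 - d.1 i • v,
        (hmem _).mpr ⟨sub_mem d.2 (D.smul_mem _ hvD), by simp [hvi]⟩⟩)
      left_inv := by
        rintro ⟨l, c, hc⟩
        have hci : c i = 0 := ((hmem _).mp hc).2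
        refine Prod.ext (by simp [hci, hvi]) ?_
        ext1
        simp [hci, hvi]
      right_inv := by
        rintro ⟨d, hd⟩
        ext1
        simp }
  calc ∑ c : D, f (c : Fin n → F)
      = ∑ p : F × D₀, f (p.1 • v + (p.2 : Fin n → F)) :=
        (Fintype.sum_equiv e (fun p => f (p.1 • v + (p.2 : Fin n → F)))
          (fun c => f (c : Fin n → F)) (fun p => rfl)).symm
    _ = ∑ l : F, ∑ c : D₀, f (l • v + (c : Fin n → F)) :=
        Fintype.sum_prod_type (f := fun p : F × D₀ => f (p.1 • v + (p.2 : Fin n → F)))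

lemma slice_finrank (D : Submodule F (Fin n → F)) {m : ℕ} (hD : Module.finrank F D = m + 1)
    {v : Fin n → F} (hvD : v ∈ D) {i : Fin n} (hvi : v i = 1) :
    Module.finrank F (D ⊓ LinearMap.ker (LinearMap.proj i) : Submodule F (Fin n → F)) = m := by
  set φ : D →ₗ[F] F := (LinearMap.proj i).comp D.subtype with hφ
  have hsurj : Function.Surjective φ := by
    intro a
    refine ⟨a • ⟨v, hvD⟩, ?_⟩
    simp [hφ, hvi]
  have hrange : LinearMap.range φ = ⊤ := LinearMap.range_eq_top.mpr hsurj
  have hrn := LinearMap.finrank_range_add_finrank_ker φ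
  rw [hrange, finrank_top, Module.finrank_self, hD] at hrn
  have hker : (LinearMap.ker φ).map D.subtype
      = (D ⊓ LinearMap.ker (LinearMap.proj i) : Submodule F (Fin n → F)) := by
    ext x
    simp only [Submodule.mem_map, LinearMap.mem_ker, Submodule.mem_inf]
    constructor
    · rintro ⟨⟨c, hc⟩, hck, rfl⟩
      exact ⟨hc, by simpa [hφ] using hck⟩
    · rintro ⟨hxD, hxi⟩
      exact ⟨⟨x, hxD⟩, by simpa [hφ] using hxi, rfl⟩
  rw [← hker, Submodule.finrank_map_subtype_eq]
  omega

lemma key (z : ℝ) (hz0 : 0 ≤ z) (hz1 : z ≤ 1) :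
    ∀ m : ℕ, ∀ D : Submodule F (Fin n → F), Module.finrank F D = m →
      (∀ c ∈ D, c ≠ 0 → 2 ≤ hammingNorm c) → ∀ y : Fin n → F,
      (∑ c : D, z ^ hammingNorm (y + (c : Fin n → F))) ≤
        (1 / (Fintype.card F : ℝ)) *
          ((1 + ((Fintype.card F : ℝ) - 1) * z) ^ (m + 1)
            + (if y ∈ D then ((Fintype.card F : ℝ) - 1) else (-1)) * (1 - z) ^ (m + 1)) := by
  have hQ2 : (2 : ℝ) ≤ (Fintype.card F : ℝ) := by exact_mod_cast Fintype.one_lt_card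
  set Q : ℝ := (Fintype.card F : ℝ) with hQdef
  have hQ0 : (0 : ℝ) < Q := by linarith
  have h1z : (0 : ℝ) ≤ 1 - z := by linarith
  have hP1 : (0 : ℝ) ≤ 1 + (Q - 1) * z := by nlinarith
  intro m
  induction m with
  | zero =>
    intro D hD hmin y
    have hbot : D = ⊥ := Submodule.finrank_eq_zero.mp hD
    subst hbot
    have hsum : (∑ c : (⊥ : Submodule F (Fin n → F)), z ^ hammingNorm (y + (c : Fin n → F)))
        = z ^ hammingNorm y := by
      rw [Fintype.sum_unique]
      have : ((default : (⊥ : Submodule F (Fin n → F))) : Fin n → F) = 0 := rfl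
      rw [this, add_zero]
    rw [hsum]
    by_cases hy : y ∈ (⊥ : Submodule F (Fin n → F))
    · rw [if_pos hy]
      rw [Submodule.mem_bot] at hy
      subst hy
      simp only [hammingNorm_zero, pow_zero, pow_one]
      have : (1 / Q) * ((1 + (Q - 1) * z) + (Q - 1) * (1 - z)) = 1 := by
        field_simp
        ring
      linarith
    · rw [if_neg hy]
      rw [Submodule.mem_bot] at hy
      have hw : 1 ≤ hammingNorm y := by
        rcases Nat.eq_zero_or_pos (hammingNorm y) with h | h
        · exact absurd (hammingNorm_eq_zero.mp h) hy
        · exact h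
      have h1 : z ^ hammingNorm y ≤ z ^ 1 := pow_le_pow_of_le_one hz0 hz1 hw
      have h2 : (1 / Q) * ((1 + (Q - 1) * z) ^ 1 + (-1) * (1 - z) ^ 1) = z := by
        field_simp
        ring
      rw [h2]
      simpa using h1
  | succ m ih =>
    intro D hD hmin y
    -- pick a coordinate functional that is onto
    have hDbot : D ≠ ⊥ := by
      intro h
      rw [h, finrank_bot] at hD
      omega
    obtain ⟨v₀, hv₀D, hv₀⟩ := (Submodule.ne_bot_iff D).mp hDbot
    obtain ⟨i, hi⟩ : ∃ i, v₀ i ≠ 0 := by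
      by_contra h
      push_neg at h
      exact hv₀ (funext h)
    set v : Fin n → F := (v₀ i)⁻¹ • v₀ with hvdef
    have hvD : v ∈ D := D.smul_mem _ hv₀D
    have hvi : v i = 1 := by
      simp [hvdef, inv_mul_cancel₀ hi]
    set D₀ : Submodule F (Fin n → F) := D ⊓ LinearMap.ker (LinearMap.proj i) with hD₀
    have hmem : ∀ x : Fin n → F, x ∈ D₀ ↔ x ∈ D ∧ x i = 0 := by
      intro x
      simp [hD₀, Submodule.mem_inf, LinearMap.mem_ker]
    have hD₀le : D₀ ≤ D := inf_le_left
    have hfr : Module.finrank F D₀ = m := slice_finrank D hD hvD hvi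
    have hmin₀ : ∀ c ∈ D₀, c ≠ 0 → 2 ≤ hammingNorm c := fun c hc => hmin c (hD₀le hc)
    have hci : ∀ c : D₀, (c : Fin n → F) i = 0 := fun c => ((hmem _).mp c.2).2
    -- decompose the sum into sub-cosets
    set S : F → ℝ := fun l => ∑ c : D₀, z ^ hammingNorm ((y + l • v) + (c : Fin n → F))
      with hSdef
    have hdec : (∑ c : D, z ^ hammingNorm (y + (c : Fin n → F))) = ∑ l : F, S l := by
      rw [sum_decomp D hvD hvi (fun x => z ^ hammingNorm (y + x))]
      exact Finset.sum_congr rfl fun l _ =>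
        Finset.sum_congr rfl fun c _ => by rw [← add_assoc]
    -- abbreviations
    set P : ℝ := (1 + (Q - 1) * z) ^ (m + 1) with hPdef
    set R : ℝ := (1 - z) ^ (m + 1) with hRdef
    have hRnn : 0 ≤ R := pow_nonneg h1z _
    have hPnn : 0 ≤ P := pow_nonneg hP1 _
    set g : ℝ := (1 / Q) * (P + (Q - 1) * R) with hgdef
    set hh : ℝ := (1 / Q) * (P - R) with hhdef
    have hhg : hh ≤ g := by
      rw [hgdef, hhdef]
      have : P - R ≤ P + (Q - 1) * R := by nlinarith
      exact mul_le_mul_of_nonneg_left this (by positivity)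
    -- IH in convenient forms
    have IHin : ∀ w : Fin n → F, w ∈ D₀ →
        (∑ c : D₀, z ^ hammingNorm (w + (c : Fin n → F))) ≤ g := by
      intro w hw
      have := ih D₀ hfr hmin₀ w
      rw [if_pos hw] at this
      exact this
    have IHout : ∀ w : Fin n → F, w ∉ D₀ →
        (∑ c : D₀, z ^ hammingNorm (w + (c : Fin n → F))) ≤ hh := by
      intro w hw
      have := ih D₀ hfr hmin₀ w
      rw [if_neg hw] at this
      have heq : 1 / Q * (P + (-1) * R) = hh := by rw [hhdef]; ring
      linarith
    -- coordinate of the shifted vectors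
    have hyl : ∀ l : F, (y + l • v) i = y i + l := by
      intro l
      simp [hvi]
    set l₀ : F := -(y i) with hl₀def
    have hl₀i : (y + l₀ • v) i = 0 := by rw [hyl, hl₀def, add_neg_cancel]
    have hlne : ∀ l : F, l ≠ l₀ → (y + l • v) i ≠ 0 := by
      intro l hl hcontra
      rw [hyl] at hcontra
      exact hl (eq_neg_of_add_eq_zero_right hcontra)
    -- factoring out z on sub-cosets avoiding coordinate i
    have hfac : ∀ l : F, (y + l • v) i ≠ 0 →
        S l = z * ∑ c : D₀, z ^ hammingNorm (Function.update (y + l • v) i 0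
          + (c : Fin n → F)) := by
      intro l hl
      rw [hSdef]
      simp only
      rw [Finset.mul_sum]
      refine Finset.sum_congr rfl fun c _ => ?_
      have h1 : ((y + l • v) + (c : Fin n → F)) i ≠ 0 := by
        rw [Pi.add_apply, hci c, add_zero]
        exact hl
      rw [hammingNorm_update_add_one h1, update_add_eq (hci c), pow_succ]
      ring
    -- splitting the outer sum at l₀
    rw [hdec, ← Finset.add_sum_erase _ S (Finset.mem_univ l₀)]
    have hcard : (Finset.univ.erase l₀).card = Fintype.card F - 1 := by
      rw [Finset.card_erase_of_mem (Finset.mem_univ _), Finset.card_univ]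
    have hcard1 : 1 ≤ Fintype.card F := Fintype.card_pos
    have hcardR : ((Fintype.card F - 1 : ℕ) : ℝ) = Q - 1 := by
      rw [Nat.cast_sub hcard1, Nat.cast_one, hQdef]
    by_cases hyD : y ∈ D
    · -- y in D : bound is g-type
      rw [if_pos hyD]
      have h1 : S l₀ ≤ g := by
        have hmeml₀ : y + l₀ • v ∈ D₀ :=
          (hmem _).mpr ⟨D.add_mem hyD (D.smul_mem _ hvD), hl₀i⟩
        exact IHin _ hmeml₀
      have h2 : ∀ l ∈ Finset.univ.erase l₀, S l ≤ z * hh := by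
        intro l hl
        have hl' : l ≠ l₀ := Finset.ne_of_mem_erase hl
        have hlne' := hlne l hl'
        rw [hfac l hlne']
        have hwout : Function.update (y + l • v) i 0 ∉ D₀ := by
          intro hwin
          refine no_weight_one hmin
            (u := (y + l • v) - Function.update (y + l • v) i 0)
            (sub_mem (D.add_mem hyD (D.smul_mem _ hvD)) (hD₀le hwin)) (i := i) ?_ ?_
          · rw [Pi.sub_apply, Function.update_self, sub_zero]
            exact hlne'
          · intro j hj
            rw [Pi.sub_apply, Function.update_of_ne hj, sub_self]
        exact mul_le_mul_of_nonneg_left (IHout _ hwout) hz0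
      have h3 : ∑ l ∈ Finset.univ.erase l₀, S l ≤ (Q - 1) * (z * hh) := by
        have := Finset.sum_le_card_nsmul _ _ _ h2
        rw [hcard] at this
        rw [nsmul_eq_mul, hcardR] at this
        exact this
      have hfin : g + (Q - 1) * (z * hh)
          = 1 / Q * ((1 + (Q - 1) * z) ^ (m + 1 + 1) + (Q - 1) * (1 - z) ^ (m + 1 + 1)) := by
        rw [pow_succ (1 + (Q - 1) * z) (m + 1), pow_succ (1 - z) (m + 1)]
        rw [hgdef, hhdef, hPdef, hRdef]
        field_simp
        ring
      linarith
    · -- y not in D : bound is h-type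
      rw [if_neg hyD]
      have h1 : S l₀ ≤ hh := by
        have hmeml₀ : y + l₀ • v ∉ D₀ := by
          intro hin
          exact hyD (by simpa using D.sub_mem (hD₀le hin) (D.smul_mem l₀ hvD))
        exact IHout _ hmeml₀
      have hfin : hh + (z * g + (Q - 2) * (z * hh))
          = 1 / Q * ((1 + (Q - 1) * z) ^ (m + 1 + 1) + (-1) * (1 - z) ^ (m + 1 + 1)) := by
        rw [pow_succ (1 + (Q - 1) * z) (m + 1), pow_succ (1 - z) (m + 1)]
        rw [hgdef, hhdef, hPdef, hRdef]
        field_simp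
        ring
      by_cases hbad : ∃ l ∈ Finset.univ.erase l₀, Function.update (y + l • v) i 0 ∈ D₀
      · -- one exceptional sub-coset
        obtain ⟨lb, hlb, hlbmem⟩ := hbad
        have hlb' : lb ≠ l₀ := Finset.ne_of_mem_erase hlb
        have huniq : ∀ l ∈ (Finset.univ.erase l₀).erase lb,
            Function.update (y + l • v) i 0 ∉ D₀ := by
          intro l hl hlmem
          have hl1 : l ≠ lb := Finset.ne_of_mem_erase hl
          -- two exceptional sub-cosets give a weight-one codeword
          refine no_weight_one hmin
            (u := (l - lb) • v - (Function.update (y + l • v) i 0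
              - Function.update (y + lb • v) i 0))
            (D.sub_mem (D.smul_mem _ hvD)
              (D.sub_mem (hD₀le hlmem) (hD₀le hlbmem))) (i := i) ?_ ?_
          · rw [Pi.sub_apply, Pi.sub_apply, Function.update_self, Function.update_self,
              Pi.smul_apply, hvi, smul_eq_mul, mul_one, sub_zero, sub_zero]
            exact sub_ne_zero_of_ne hl1
          · intro j hj
            rw [Pi.sub_apply, Pi.sub_apply, Function.update_of_ne hj, Function.update_of_ne hj,
              Pi.smul_apply, smul_eq_mul, Pi.add_apply, Pi.add_apply,
              Pi.smul_apply, Pi.smul_apply, smul_eq_mul, smul_eq_mul]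
            ring
        have h2 : S lb ≤ z * g := by
          rw [hfac lb (hlne lb hlb')]
          exact mul_le_mul_of_nonneg_left (IHin _ hlbmem) hz0
        have h3 : ∀ l ∈ (Finset.univ.erase l₀).erase lb, S l ≤ z * hh := by
          intro l hl
          have hl0 : l ≠ l₀ := Finset.ne_of_mem_erase (Finset.mem_of_mem_erase hl)
          rw [hfac l (hlne l hl0)]
          exact mul_le_mul_of_nonneg_left (IHout _ (huniq l hl)) hz0
        have hcard2 : ((Finset.univ.erase l₀).erase lb).card = Fintype.card F - 2 := by
          rw [Finset.card_erase_of_mem (Finset.mem_erase.mpr ⟨hlb', Finset.mem_univ _⟩), hcard]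
          omega
        have hcard2R : ((Fintype.card F - 2 : ℕ) : ℝ) = Q - 2 := by
          have h2c : 2 ≤ Fintype.card F := Fintype.one_lt_card
          rw [Nat.cast_sub h2c, hQdef]
          norm_num
        have h4 : ∑ l ∈ (Finset.univ.erase l₀).erase lb, S l ≤ (Q - 2) * (z * hh) := by
          have := Finset.sum_le_card_nsmul _ _ _ h3
          rw [hcard2, nsmul_eq_mul, hcard2R] at this
          exact this
        have h5 : ∑ l ∈ Finset.univ.erase l₀, S l
            = S lb + ∑ l ∈ (Finset.univ.erase l₀).erase lb, S l :=
          (Finset.add_sum_erase _ S hlb).symm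
        rw [h5]
        linarith
      · -- no exceptional sub-coset
        push_neg at hbad
        have h3 : ∀ l ∈ Finset.univ.erase l₀, S l ≤ z * hh := by
          intro l hl
          rw [hfac l (hlne l (Finset.ne_of_mem_erase hl))]
          exact mul_le_mul_of_nonneg_left (IHout _ (hbad l hl)) hz0
        have h4 : ∑ l ∈ Finset.univ.erase l₀, S l ≤ (Q - 1) * (z * hh) := by
          have := Finset.sum_le_card_nsmul _ _ _ h3
          rw [hcard, nsmul_eq_mul, hcardR] at this
          exact this
        have hzh_le : z * hh ≤ z * g := mul_le_mul_of_nonneg_left hhg hz0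
        linarith


end WeightEnumAux

/-- If `C` is an `[n,k;q]` code with minimum distance at least 2, then for all
`z ∈ [0,1]`, `A_C(z) ≤ (1/q)[(1+(q-1)z)^{k+1} + (q-1)(1-z)^{k+1}]`. -/
theorem weightEnum_le_of_min_dist_two {F : Type*} [Field F] [Fintype F] {n k q : ℕ}
    (hq : Fintype.card F = q) (hk : 1 ≤ k) (hkn : k ≤ n)
    (C : Submodule F (Fin n → F)) (hdim : Module.finrank F C = k)
    (hmin : ∀ c ∈ C, c ≠ 0 → 2 ≤ hammingNorm c) :
    ∀ z : ℝ, 0 ≤ z → z ≤ 1 →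
      weightEnum C z ≤
        (1 / (q : ℝ)) * ((1 + ((q : ℝ) - 1) * z) ^ (k + 1)
          + ((q : ℝ) - 1) * (1 - z) ^ (k + 1)) := by
  intro z hz0 hz1
  have H := WeightEnumAux.key z hz0 hz1 k C hdim hmin 0
  rw [if_pos (zero_mem C)] at H
  simp only [zero_add] at H
  rw [hq] at H
  exact H
end

section
/- If C is a linear [n,k;q] code with minimum distance at least 2 and A_C(z_0) = (1/q)[(1+(q-1)z_0)^{k+1} + (q-1)(1-z_0)^{k+1}] for some z_0 ∈ (0,1), then for all i with 0 ≤ i ≤ n, A_i(C) = A_i(E_{n,k,v}), where v ∈ F_q^k is any vector of full support and E_{n,k,v} is the code {(x, x·v, 0, ..., 0) : x ∈ F_q^k} ⊆ F_q^n. -/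
open scoped Classical

/-- Number of codewords of Hamming weight `i`: the weight distribution `A_i(C)`. -/
noncomputable def weightCount {F : Type*} [Field F] [Fintype F] {n : ℕ}
    (C : Submodule F (Fin n → F)) (i : ℕ) : ℕ :=
  (Finset.univ.filter (fun c : C => hammingNorm (c : Fin n → F) = i)).card

/-- The linear map `x ↦ (x, x·v, 0, ..., 0)`. -/
noncomputable def Emap (F : Type*) [Field F] (n k : ℕ) (v : Fin k → F) :
    (Fin k → F) →ₗ[F] (Fin n → F) where
  toFun x := fun i =>
    if h : (i : ℕ) < k then x ⟨i, h⟩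
    else if (i : ℕ) = k then ∑ j, x j * v j else 0
  map_add' x y := by
    funext i
    by_cases h : (i : ℕ) < k
    · simp [h]
    · by_cases h2 : (i : ℕ) = k <;> simp [h, h2, add_mul, Finset.sum_add_distrib]
  map_smul' t x := by
    funext i
    by_cases h : (i : ℕ) < k
    · simp [h]
    · by_cases h2 : (i : ℕ) = k <;> simp [h, h2, Finset.mul_sum, mul_assoc]

/-- The code `E_{n,k,v} = {(x, x·v, 0, ..., 0) : x ∈ F_q^k}`. -/
noncomputable def Ecode (F : Type*) [Field F] (n k : ℕ) (v : Fin k → F) :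
    Submodule F (Fin n → F) :=
  LinearMap.range (Emap F n k v)

open Finset Function Module

/-!
Pick an information set `ι` of `C` (coordinates on which `c ↦ c ∘ ι` is an isomorphism
`C ≃ F^k`) and let `C'` be the code of codewords supported on `ι`, read on `ι`. Every codeword
satisfies `wt c ≥ wt (c ∘ ι) + [c ∘ ι ∉ C']`, so for `0 < z < 1`
`A_C(z) ≤ ∑_{x ∈ F^k} z^(wt x + [x ∉ C']) = z (1 + (q-1) z)^k + (1 - z) A_{C'}(z)`.
Minimum distance 2 passes to `C'` and forbids `C' = F^k`, so induction on the dimension bounds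
`A_C(z)` by the weight enumerator of the `[k+1, k]` parity-check code. At equality all these
inequalities are tight: `C'` is extremal of dimension `k - 1`, and the weights of `C` are those
of `x ↦ wt x + [x ∉ C']`, a distribution determined by that of `C'`. Induction identifies it
with the distribution of `x ↦ wt x + [∑ x_j ≠ 0]`, which is that of `E_{n,k,v}`.
-/

/-- The weight enumerator of the `[t+1, t]` parity-check code (MacWilliams dual of the
repetition code). -/
noncomputable def extremalEnum (q : ℝ) (t : ℕ) (z : ℝ) : ℝ :=
  1 / q * ((1 + (q - 1) * z) ^ (t + 1) + (q - 1) * (1 - z) ^ (t + 1))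

section ExtremalEnum

variable {q z : ℝ}

theorem extremalEnum_zero (hq : q ≠ 0) : extremalEnum q 0 z = 1 := by
  unfold extremalEnum
  field_simp
  ring

theorem extremalEnum_succ (hq : q ≠ 0) (t : ℕ) :
    extremalEnum q (t + 1) z
      = z * (1 + (q - 1) * z) ^ (t + 1) + (1 - z) * extremalEnum q t z := by
  unfold extremalEnum
  field_simp
  ring

theorem extremalEnum_strictMono (hq : 1 < q) (hz₀ : 0 < z) (hz₁ : z < 1) :
    StrictMono (extremalEnum q · z) := by
  refine strictMono_nat_of_lt_succ fun t => ?_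
  have hpow : (1 - z) ^ (t + 1) < (1 + (q - 1) * z) ^ (t + 1) :=
    pow_lt_pow_left₀ (by nlinarith) (by linarith) t.succ_ne_zero
  have hlt : extremalEnum q t z < (1 + (q - 1) * z) ^ (t + 1) := by
    unfold extremalEnum
    rw [div_mul_eq_mul_div, one_mul, div_lt_iff₀ (by linarith)]
    nlinarith
  rw [extremalEnum_succ (by positivity)]
  nlinarith

end ExtremalEnum

section HammingNorm

variable {α β M : Type*} [Fintype α] [Fintype β] [Zero M]

theorem pow_hammingNorm (z : ℝ) (x : α → M) :
    z ^ hammingNorm x = ∏ i, if x i = 0 then 1 else z := by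
  rw [prod_ite, prod_const_one, one_mul, prod_const, hammingNorm]

theorem sum_pow_hammingNorm [Fintype M] (z : ℝ) (t : ℕ) :
    ∑ x : Fin t → M, z ^ hammingNorm x = (1 + (Fintype.card M - 1) * z) ^ t := by
  have hsum : ∑ a : M, (if a = 0 then 1 else z) = 1 + (Fintype.card M - 1) * z := by
    rw [Fintype.sum_eq_add_sum_compl 0, if_pos rfl,
      sum_congr rfl fun a ha => if_neg (mem_compl.mp ha ∘ mem_singleton.mpr)]
    simp [card_compl, Nat.cast_sub Fintype.card_pos]
  simp_rw [← hsum, Fintype.sum_pow, pow_hammingNorm]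

theorem hammingNorm_snoc {t : ℕ} (x : Fin t → M) (a : M) :
    hammingNorm (Fin.snoc x a : Fin (t + 1) → M) = hammingNorm x + if a = 0 then 0 else 1 := by
  simp only [hammingNorm, card_filter, Fin.sum_univ_castSucc, Fin.snoc_castSucc, Fin.snoc_last]
  by_cases ha : a = 0 <;> simp [ha]

theorem hammingNorm_extend_zero {ι : α → β} (hι : Injective ι) (x : α → M) :
    hammingNorm (extend ι x 0) = hammingNorm x := by
  rw [hammingNorm, hammingNorm, ← card_image_of_injective _ hι]
  congr 1
  ext j
  by_cases hj : ∃ i, ι i = j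
  · obtain ⟨i, rfl⟩ := hj
    simp [hι.extend_apply, hι.eq_iff]
  · simp only [mem_filter, mem_univ, true_and, mem_image, extend_apply' _ _ _ hj]
    exact ⟨fun h => absurd rfl h, fun ⟨i, _, hi⟩ => absurd ⟨i, hi⟩ hj⟩

theorem hammingNorm_comp_add_ite_le {ι : α → β} (hι : Injective ι) (c : β → M) :
    hammingNorm (c ∘ ι) + (if extend ι (c ∘ ι) 0 = c then 0 else 1) ≤ hammingNorm c := by
  set y := extend ι (c ∘ ι) 0
  have hy : ∀ j, y j = c j ∨ y j = 0 := by
    intro j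
    by_cases hj : ∃ i, ι i = j
    · obtain ⟨i, rfl⟩ := hj
      exact Or.inl (hι.extend_apply _ _ i)
    · exact Or.inr (extend_apply' _ _ _ hj)
  have hsub : univ.filter (y · ≠ 0) ⊆ univ.filter (c · ≠ 0) := by
    intro j hj
    simp only [mem_filter, mem_univ, true_and] at hj ⊢
    rcases hy j with h | h <;> simp_all
  rw [← hammingNorm_extend_zero hι]
  split_ifs with h
  · exact card_le_card hsub
  · obtain ⟨j, hj⟩ := ne_iff.mp h
    have hyj : y j = 0 := (hy j).resolve_left hj
    refine card_lt_card ⟨hsub, fun hsup => ?_⟩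
    have hcj : j ∈ univ.filter (c · ≠ 0) := by simpa using fun hc => hj (hyj.trans hc.symm)
    exact (mem_filter.mp (hsup hcj)).2 hyj

end HammingNorm

section OnePointExtension

variable {α : Type*} (w : α → ℕ) (p : α → Prop) [DecidablePred p]

theorem sum_pow_add_ite [Fintype α] (z : ℝ) :
    ∑ a, z ^ (w a + if p a then 0 else 1)
      = z * ∑ a, z ^ w a + (1 - z) * ∑ a with p a, z ^ w a := by
  rw [sum_filter, mul_sum, mul_sum, ← sum_add_distrib]
  refine sum_congr rfl fun a _ => ?_
  split_ifs <;> ring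

theorem Multiset.map_add_ite (s : Multiset α) :
    s.map (fun a => w a + if p a then 0 else 1)
      = (s.filter p).map w + (s.map w - (s.filter p).map w).map (· + 1) := by
  have hw : s.map w = (s.filter p).map w + (s.filter (¬p ·)).map w := by
    rw [← Multiset.map_add, Multiset.filter_add_not]
  rw [hw, add_tsub_cancel_left, Multiset.map_map]
  conv_lhs => rw [← Multiset.filter_add_not p s, Multiset.map_add]
  congr 1
  · exact Multiset.map_congr rfl fun a ha => by simp [(Multiset.mem_filter.mp ha).2]
  · exact Multiset.map_congr rfl fun a ha => by simp [(Multiset.mem_filter.mp ha).2]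

theorem Multiset.map_add_ite_congr {s : Multiset α} {p' : α → Prop} [DecidablePred p']
    (h : (s.filter p).map w = (s.filter p').map w) :
    s.map (fun a => w a + if p a then 0 else 1)
      = s.map (fun a => w a + if p' a then 0 else 1) := by
  rw [Multiset.map_add_ite, Multiset.map_add_ite, h]

end OnePointExtension

theorem eq_of_sum_pow_eq {α : Type*} [Fintype α] {z : ℝ} (hz₀ : 0 < z) (hz₁ : z < 1)
    {f g : α → ℕ} (hle : ∀ a, g a ≤ f a) (heq : ∑ a, z ^ f a = ∑ a, z ^ g a) : f = g := by
  have hpow : ∀ a ∈ univ, z ^ f a ≤ z ^ g a := fun a _ =>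
    pow_le_pow_of_le_one hz₀.le hz₁.le (hle a)
  funext a
  exact pow_right_injective₀ hz₀ hz₁.ne ((sum_eq_sum_iff_of_le hpow).mp heq a (mem_univ a))

section WeightDistrib

variable {F : Type*} [Field F] [Fintype F] {n : ℕ}

noncomputable def weightDistrib (C : Submodule F (Fin n → F)) : Multiset ℕ :=
  univ.val.map fun c : C => hammingNorm (c : Fin n → F)

theorem weightCount_eq_count (C : Submodule F (Fin n → F)) (i : ℕ) :
    weightCount C i = (weightDistrib C).count i := by
  simp only [weightCount, weightDistrib, Multiset.count_map, eq_comm]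
  rfl

theorem weightEnum_eq_sum_map_weightDistrib (C : Submodule F (Fin n → F)) (z : ℝ) :
    weightEnum C z = ((weightDistrib C).map (z ^ ·)).sum := by
  rw [weightEnum, weightDistrib, Multiset.map_map]
  rfl

theorem weightEnum_eq_sum_filter (C : Submodule F (Fin n → F)) (z : ℝ) :
    weightEnum C z = ∑ x with x ∈ C, z ^ hammingNorm x :=
  (sum_subtype _ (fun _ => mem_filter_univ _) (fun x => z ^ hammingNorm x)).symm

theorem weightDistrib_eq_map_filter (C : Submodule F (Fin n → F)) :
    weightDistrib C = (univ.filter (· ∈ C)).val.map hammingNorm := by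
  rw [weightDistrib, ← subtype_map, map_val, Multiset.map_map, subtype_univ]
  rfl

theorem weightDistrib_eq_map_equiv {α : Type*} [Fintype α] (C : Submodule F (Fin n → F))
    (e : α ≃ C) : weightDistrib C = univ.val.map fun a => hammingNorm (e a : Fin n → F) := by
  rw [weightDistrib, ← Multiset.map_univ_val_equiv e, Multiset.map_map]
  rfl

theorem weightDistrib_eq_singleton_zero (C : Submodule F (Fin n → F)) (h : finrank F C = 0) :
    weightDistrib C = {0} := by
  have : Subsingleton C := finrank_zero_iff.mp h
  have : Unique C := uniqueOfSubsingleton 0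
  simp [weightDistrib, Unique.default_eq (0 : C)]

/-- The weights of the codewords `(x, ∑ x_j)` of the `[t+1, t]` parity-check code. -/
noncomputable def parityWeights (F : Type*) [Field F] [Fintype F] (t : ℕ) : Multiset ℕ :=
  univ.val.map fun x : Fin t → F => hammingNorm x + if ∑ j, x j = 0 then 0 else 1

theorem parityWeights_zero : parityWeights F 0 = {0} := by
  simp [parityWeights, Unique.default_eq (0 : Fin 0 → F)]

theorem map_hammingNorm_filter_sum_eq_zero (s : ℕ) :
    (univ.filter fun x : Fin (s + 1) → F => ∑ j, x j = 0).val.map hammingNorm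
      = parityWeights F s := by
  have hinj : Injective fun y : Fin s → F => (Fin.snoc y (-∑ j, y j) : Fin (s + 1) → F) :=
    fun a b h => by simpa using congrArg Fin.init h
  have hfilter :
      univ.filter (fun x : Fin (s + 1) → F => ∑ j, x j = 0) = univ.map ⟨_, hinj⟩ := by
    ext x
    simp only [mem_filter, mem_univ, true_and, mem_map, Embedding.coeFn_mk]
    constructor
    · intro hx
      rw [Fin.sum_univ_castSucc] at hx
      refine ⟨Fin.init x, ?_⟩
      conv_rhs => rw [← Fin.snoc_init_self x, eq_neg_of_add_eq_zero_right hx]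
      rfl
    · rintro ⟨y, rfl⟩
      simp [Fin.sum_univ_castSucc]
  rw [hfilter, map_val, Multiset.map_map, parityWeights]
  congr 1
  funext y
  simp [hammingNorm_snoc]

end WeightDistrib

section Shortening

variable {F : Type*} [Field F] {m t : ℕ}

theorem exists_informationSet (D : Submodule F (Fin m → F)) (hD : finrank F D = t) :
    ∃ ι : Fin t → Fin m, Injective ι ∧
      ∃ e : D ≃ₗ[F] (Fin t → F), ∀ c : D, e c = (c : Fin m → F) ∘ ι := by
  subst hD
  let φ : Fin m → Dual F D := fun i => (LinearMap.proj i).comp D.subtype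
  obtain ⟨κ, a, ha, hspan, hli⟩ := exists_linearIndependent' F φ
  have : Fintype κ := Fintype.ofInjective a ha
  have hsep : ∀ c ∈ D, c ∘ a = 0 → c = 0 := by
    intro c hc h0
    have hev : Submodule.span F (Set.range φ) ≤ LinearMap.ker (Dual.eval F D ⟨c, hc⟩) := by
      rw [← hspan, Submodule.span_le]
      rintro _ ⟨j, rfl⟩
      exact congrFun h0 j
    funext i
    exact hev (Submodule.subset_span ⟨i, rfl⟩)
  have hcard : Fintype.card κ = finrank F D := by
    apply le_antisymm
    · simpa [Subspace.dual_finrank_eq] using hli.fintype_card_le_finrank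
    · have hinj : Injective ((LinearMap.funLeft F F a).comp D.subtype) := by
        rw [← LinearMap.ker_eq_bot, LinearMap.ker_eq_bot']
        exact fun c hc => Subtype.ext (hsep c c.2 hc)
      simpa using LinearMap.finrank_le_finrank_of_injective hinj
  let ι := a ∘ (Fintype.equivFinOfCardEq hcard).symm
  have hinj : Injective ((LinearMap.funLeft F F ι).comp D.subtype) := by
    rw [← LinearMap.ker_eq_bot, LinearMap.ker_eq_bot']
    refine fun c hc => Subtype.ext (hsep c c.2 (funext fun j => ?_))
    simpa [ι] using congrFun hc (Fintype.equivFinOfCardEq hcard j)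
  exact ⟨ι, ha.comp (Equiv.injective _),
    LinearMap.linearEquivOfInjective _ hinj (by simp), fun _ => rfl⟩

/-- The codewords of `D` supported on the range of `ι`, read on `ι`. -/
noncomputable def shortening (D : Submodule F (Fin m → F)) (ι : Fin t → Fin m) :
    Submodule F (Fin t → F) :=
  D.comap (ExtendByZero.linearMap F ι)

theorem two_le_hammingNorm_of_mem_shortening {D : Submodule F (Fin m → F)} {ι : Fin t → Fin m}
    (hι : Injective ι) (hmin : ∀ c ∈ D, c ≠ 0 → 2 ≤ hammingNorm c) :
    ∀ x ∈ shortening D ι, x ≠ 0 → 2 ≤ hammingNorm x := by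
  intro x hx hx0
  rw [← hammingNorm_extend_zero hι]
  refine hmin _ hx fun h => hx0 (funext fun i => ?_)
  simpa [hι.extend_apply] using congrFun h (ι i)

theorem finrank_lt_of_two_le_hammingNorm {P : Submodule F (Fin t → F)} (ht : 0 < t)
    (hP : ∀ x ∈ P, x ≠ 0 → 2 ≤ hammingNorm x) : finrank F P < t := by
  let i : Fin t := ⟨0, ht⟩
  have hsingle : (Pi.single i 1 : Fin t → F) ∉ P := fun hmem => by
    have h2 := hP _ hmem (by simp)
    have h1 : hammingNorm (Pi.single i 1 : Fin t → F) ≤ 1 :=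
      card_le_one.mpr fun a ha b hb => by simp_all [Pi.single_apply]
    omega
  simpa using Submodule.finrank_lt (s := P) fun h => hsingle (h ▸ Submodule.mem_top)

variable {D : Submodule F (Fin m → F)} {ι : Fin t → Fin m} {e : D ≃ₗ[F] (Fin t → F)}

theorem hammingNorm_add_ite_shortening_le (hι : Injective ι)
    (he : ∀ c : D, e c = (c : Fin m → F) ∘ ι) (c : D) :
    hammingNorm (e c) + (if e c ∈ shortening D ι then 0 else 1)
      ≤ hammingNorm (c : Fin m → F) := by
  refine le_trans ?_ (hammingNorm_comp_add_ite_le hι (c : Fin m → F))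
  have hmem : extend ι ((c : Fin m → F) ∘ ι) 0 = c → (c : Fin m → F) ∘ ι ∈ shortening D ι :=
    fun h => show extend ι _ 0 ∈ D by rw [h]; exact c.2
  rw [he]
  split_ifs <;> simp_all

variable [Fintype F] {z : ℝ}

theorem weightEnum_le_sum_shortening (hι : Injective ι)
    (he : ∀ c : D, e c = (c : Fin m → F) ∘ ι) (hz₀ : 0 < z) (hz₁ : z < 1) :
    weightEnum D z ≤ ∑ x, z ^ (hammingNorm x + if x ∈ shortening D ι then 0 else 1) := by
  rw [weightEnum, ← e.toEquiv.sum_comp]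
  exact sum_le_sum fun c _ =>
    pow_le_pow_of_le_one hz₀.le hz₁.le (hammingNorm_add_ite_shortening_le hι he c)

theorem weightDistrib_eq_of_weightEnum_eq (hι : Injective ι)
    (he : ∀ c : D, e c = (c : Fin m → F) ∘ ι) (hz₀ : 0 < z) (hz₁ : z < 1)
    (h : weightEnum D z = ∑ x, z ^ (hammingNorm x + if x ∈ shortening D ι then 0 else 1)) :
    weightDistrib D
      = univ.val.map fun x => hammingNorm x + if x ∈ shortening D ι then 0 else 1 := by
  rw [weightEnum, ← e.toEquiv.sum_comp] at h
  rw [weightDistrib, eq_of_sum_pow_eq hz₀ hz₁ (hammingNorm_add_ite_shortening_le hι he) h,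
    ← Multiset.map_univ_val_equiv e.toEquiv, Multiset.map_map]
  rfl

end Shortening

theorem weightEnum_le_extremalEnum {F : Type*} [Field F] [Fintype F] {z : ℝ} (hz₀ : 0 < z)
    (hz₁ : z < 1) {m : ℕ} (D : Submodule F (Fin m → F))
    (hmin : ∀ c ∈ D, c ≠ 0 → 2 ≤ hammingNorm c) :
    weightEnum D z ≤ extremalEnum (Fintype.card F) (finrank F D) z ∧
      (weightEnum D z = extremalEnum (Fintype.card F) (finrank F D) z →
        weightDistrib D = parityWeights F (finrank F D)) := by
  have hq : (1 : ℝ) < Fintype.card F := by exact_mod_cast Fintype.one_lt_card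
  have hq₀ : (Fintype.card F : ℝ) ≠ 0 := by positivity
  induction hD : finrank F D using Nat.strong_induction_on generalizing m D with
  | _ t ih =>
  cases t with
  | zero =>
    have hzero := weightDistrib_eq_singleton_zero D hD
    simp [weightEnum_eq_sum_map_weightDistrib, hzero, extremalEnum_zero hq₀, parityWeights_zero]
  | succ s =>
    obtain ⟨ι, hι, e, he⟩ := exists_informationSet D hD
    set D' := shortening D ι
    have hmin' := two_le_hammingNorm_of_mem_shortening hι hmin
    have hlt : finrank F D' ≤ s :=
      Nat.le_of_lt_succ (finrank_lt_of_two_le_hammingNorm s.succ_pos hmin')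
    obtain ⟨hle', heq'⟩ := ih _ (Nat.lt_succ_of_le hlt) D' hmin' rfl
    have hmono := extremalEnum_strictMono hq hz₀ hz₁
    have hD'le : weightEnum D' z ≤ extremalEnum (Fintype.card F) s z :=
      hle'.trans (hmono.monotone hlt)
    have hsum : ∑ x, z ^ (hammingNorm x + if x ∈ D' then 0 else 1)
        = z * (1 + (Fintype.card F - 1) * z) ^ (s + 1) + (1 - z) * weightEnum D' z := by
      rw [sum_pow_add_ite, sum_pow_hammingNorm, weightEnum_eq_sum_filter]
    have hbound := (weightEnum_le_sum_shortening hι he hz₀ hz₁).trans_eq hsum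
    rw [extremalEnum_succ hq₀]
    refine ⟨by nlinarith, fun heq => ?_⟩
    have hD' : weightEnum D' z = extremalEnum (Fintype.card F) s z := by nlinarith
    have hs : finrank F D' = s := by
      by_contra hne
      have := hmono (lt_of_le_of_ne hlt hne)
      linarith
    rw [weightDistrib_eq_of_weightEnum_eq hι he hz₀ hz₁ (by rw [hsum, hD', heq]), parityWeights]
    refine Multiset.map_add_ite_congr _ _ ?_
    rw [← filter_val, ← filter_val, ← weightDistrib_eq_map_filter, heq' (by rw [hs]; exact hD'),
      hs, map_hammingNorm_filter_sum_eq_zero]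

theorem Emap_eq_extend {F : Type*} [Field F] {n k : ℕ} (hkn : k + 1 ≤ n) (v x : Fin k → F) :
    Emap F n k v x = extend (Fin.castLE hkn) (Fin.snoc x (∑ j, x j * v j)) 0 := by
  funext i
  by_cases hi : (i : ℕ) < k + 1
  · rw [show i = Fin.castLE hkn ⟨i, hi⟩ from rfl, (Fin.castLE_injective hkn).extend_apply]
    simp only [Emap, LinearMap.coe_mk, AddHom.coe_mk, Fin.snoc, Fin.val_castLE]
    split_ifs <;> first | rfl | omega
  · rw [extend_apply' _ _ _ fun ⟨j, hj⟩ => hi (hj ▸ j.2)]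
    simp only [Emap, LinearMap.coe_mk, AddHom.coe_mk, Pi.zero_apply]
    rw [dif_neg (by omega), if_neg (by omega)]

theorem weightDistrib_Ecode {F : Type*} [Field F] [Fintype F] {n k : ℕ} (hkn : k + 1 ≤ n)
    {v : Fin k → F} (hv : ∀ j, v j ≠ 0) :
    weightDistrib (Ecode F n k v) = parityWeights F k := by
  have hinj : Injective (Emap F n k v) := by
    intro x y h
    rw [Emap_eq_extend hkn, Emap_eq_extend hkn] at h
    simpa using congrArg Fin.init (extend_injective (Fin.castLE_injective hkn) 0 h)
  let scale : (Fin k → F) ≃ (Fin k → F) :=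
    Equiv.piCongrRight fun j => Equiv.mulRight₀ (v j) (hv j)
  rw [Ecode, weightDistrib_eq_map_equiv _ (LinearEquiv.ofInjective _ hinj).toEquiv, parityWeights]
  conv_rhs => rw [← Multiset.map_univ_val_equiv scale, Multiset.map_map]
  congr 1
  funext x
  have hscale : hammingNorm (scale x) = hammingNorm x :=
    hammingNorm_comp (fun j a => a * v j) (fun j => mul_left_injective₀ (hv j)) fun _ => zero_mul _
  simp only [comp_apply, LinearEquiv.coe_toEquiv, LinearEquiv.ofInjective_apply, hscale,
    Emap_eq_extend hkn, hammingNorm_extend_zero (Fin.castLE_injective hkn), hammingNorm_snoc]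
  rfl

theorem weightCount_eq_Ecode_of_extremal_general {F : Type*} [Field F] [Fintype F] {n k q : ℕ}
    (hq : Fintype.card F = q) (hkn : k + 1 ≤ n)
    (C : Submodule F (Fin n → F)) (hdim : Module.finrank F C = k)
    (hmin : ∀ c ∈ C, c ≠ 0 → 2 ≤ hammingNorm c)
    (z₀ : ℝ) (hz₀ : 0 < z₀) (hz₁ : z₀ < 1)
    (heq : weightEnum C z₀ =
      (1 / (q : ℝ)) * ((1 + ((q : ℝ) - 1) * z₀) ^ (k + 1)
        + ((q : ℝ) - 1) * (1 - z₀) ^ (k + 1)))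
    (v : Fin k → F) (hv : ∀ j, v j ≠ 0) :
    ∀ i : ℕ, i ≤ n → weightCount C i = weightCount (Ecode F n k v) i := by
  subst hq hdim
  intro i _
  rw [weightCount_eq_count, weightCount_eq_count, weightDistrib_Ecode hkn hv,
    (weightEnum_le_extremalEnum hz₀ hz₁ C hmin).2 heq]

/-- If `C` is an `[n,k;q]` code of minimum distance at least 2 whose weight
distribution function attains the bound `(1/q)[(1+(q-1)z)^{k+1}+(q-1)(1-z)^{k+1}]`
at some `z₀ ∈ (0,1)`, then `C` has the same weight distribution as `E_{n,k,v}`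
for any `v` of full support. -/
theorem weightCount_eq_Ecode_of_extremal {F : Type*} [Field F] [Fintype F] {n k q : ℕ}
    (hq : Fintype.card F = q) (hk : 1 ≤ k) (hkn : k + 1 ≤ n)
    (C : Submodule F (Fin n → F)) (hdim : Module.finrank F C = k)
    (hmin : ∀ c ∈ C, c ≠ 0 → 2 ≤ hammingNorm c)
    (z₀ : ℝ) (hz₀ : 0 < z₀) (hz₁ : z₀ < 1)
    (heq : weightEnum C z₀ =
      (1 / (q : ℝ)) * ((1 + ((q : ℝ) - 1) * z₀) ^ (k + 1)
        + ((q : ℝ) - 1) * (1 - z₀) ^ (k + 1)))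
    (v : Fin k → F) (hv : ∀ j, v j ≠ 0) :
    ∀ i : ℕ, i ≤ n → weightCount C i = weightCount (Ecode F n k v) i :=
  weightCount_eq_Ecode_of_extremal_general hq hkn C hdim hmin z₀ hz₀ hz₁ heq v hv
end

section
/- Let C and C' be linear [n,k;q] codes such that Σ_{i=1}^j A_i(C) ≤ Σ_{i=1}^j A_i(C') for every j with 1 ≤ j ≤ n. If A_C(z_0) = A_{C'}(z_0) for some z_0 ∈ (0,1), then A_i(C) = A_i(C') for all i with 1 ≤ i ≤ n. -/
open scoped Classical

lemma abel_aux (b : ℕ → ℝ) (z : ℝ) (n : ℕ) :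
    ∑ i ∈ Finset.Icc 1 n, b i * z ^ i
      = (∑ j ∈ Finset.Icc 1 n, (∑ i ∈ Finset.Icc 1 j, b i) * (z ^ j - z ^ (j+1)))
        + (∑ i ∈ Finset.Icc 1 n, b i) * z ^ (n+1) := by
  induction n with
  | zero => simp
  | succ m ih =>
    simp only [Finset.sum_Icc_succ_top (Nat.le_add_left 1 m)]
    rw [ih]; ring

lemma weightEnum_eq {F : Type*} [Field F] [Fintype F] {n : ℕ}
    (C : Submodule F (Fin n → F)) (z : ℝ) :
    weightEnum C z = ∑ i ∈ Finset.range (n+1), (weightCount C i : ℝ) * z ^ i := by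
  unfold weightEnum weightCount
  rw [← Finset.sum_fiberwise_of_maps_to
      (g := fun c : C => hammingNorm (c : Fin n → F)) (t := Finset.range (n+1))
      (fun c _ => Finset.mem_range.2 (Nat.lt_succ_of_le
        (le_trans hammingNorm_le_card_fintype (by simp))))]
  refine Finset.sum_congr rfl fun i _ => ?_
  have hcong : ∀ c ∈ Finset.univ.filter (fun c : C => hammingNorm (c : Fin n → F) = i),
      z ^ hammingNorm (c : Fin n → F) = z ^ i :=
    fun c hc => by rw [(Finset.mem_filter.1 hc).2]
  rw [Finset.sum_congr rfl hcong, Finset.sum_const, nsmul_eq_mul]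

lemma weightCount_zero {F : Type*} [Field F] [Fintype F] {n : ℕ}
    (C : Submodule F (Fin n → F)) : weightCount C 0 = 1 := by
  unfold weightCount
  rw [show (Finset.univ.filter (fun c : C => hammingNorm (c : Fin n → F) = 0)) = {0} from ?_]
  · simp
  · ext c
    simp only [Finset.mem_filter, Finset.mem_univ, true_and, Finset.mem_singleton]
    rw [hammingNorm_eq_zero, ZeroMemClass.coe_eq_zero]

/-- If `Σ_{i=1}^j A_i(C) ≤ Σ_{i=1}^j A_i(C')` for all `1 ≤ j ≤ n` and
`A_C(z₀) = A_{C'}(z₀)` for some `z₀ ∈ (0,1)`, then `A_i(C) = A_i(C')` for all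
`1 ≤ i ≤ n`. -/
theorem weightCount_eq_of_partial_sums_le_of_eq {F : Type*} [Field F] [Fintype F] {n k q : ℕ}
    (hq : Fintype.card F = q) (hk : 1 ≤ k) (hkn : k ≤ n)
    (C C' : Submodule F (Fin n → F))
    (hdim : Module.finrank F C = k) (hdim' : Module.finrank F C' = k)
    (hsum : ∀ j : ℕ, 1 ≤ j → j ≤ n →
      ∑ i ∈ Finset.Icc 1 j, weightCount C i ≤ ∑ i ∈ Finset.Icc 1 j, weightCount C' i)
    (z₀ : ℝ) (hz₀ : 0 < z₀) (hz₁ : z₀ < 1)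
    (heq : weightEnum C z₀ = weightEnum C' z₀) :
    ∀ i : ℕ, 1 ≤ i → i ≤ n → weightCount C i = weightCount C' i := by
  set b : ℕ → ℝ := fun i => (weightCount C' i : ℝ) - (weightCount C i : ℝ) with hb
  have hrange : Finset.range (n+1) = insert 0 (Finset.Icc 1 n) := by
    ext i; simp [Nat.lt_succ_iff]; omega
  have h0 : (0 : ℕ) ∉ Finset.Icc 1 n := by simp
  -- the key sum identity
  have hkey : ∑ i ∈ Finset.Icc 1 n, b i * z₀ ^ i = 0 := by
    have h1 := heq
    rw [weightEnum_eq, weightEnum_eq, hrange, Finset.sum_insert h0,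
        Finset.sum_insert h0, weightCount_zero, weightCount_zero] at h1
    simp only [hb, sub_mul, Finset.sum_sub_distrib]
    linarith
  -- partial sums are nonneg
  have hfnn : ∀ j ∈ Finset.Icc 1 n, 0 ≤ ∑ i ∈ Finset.Icc 1 j, b i := by
    intro j hj
    rw [Finset.mem_Icc] at hj
    have := hsum j hj.1 hj.2
    simp only [hb, Finset.sum_sub_distrib]
    rw [sub_nonneg]
    exact_mod_cast this
  have hcoef : ∀ j : ℕ, 0 < z₀ ^ j - z₀ ^ (j+1) := by
    intro j
    have : z₀ ^ (j+1) < z₀ ^ j * 1 := by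
      rw [pow_succ]
      exact mul_lt_mul_of_pos_left hz₁ (pow_pos hz₀ j)
    linarith [this]
  rw [abel_aux] at hkey
  have hterm_nn : ∀ j ∈ Finset.Icc 1 n,
      0 ≤ (∑ i ∈ Finset.Icc 1 j, b i) * (z₀ ^ j - z₀ ^ (j+1)) :=
    fun j hj => mul_nonneg (hfnn j hj) (hcoef j).le
  have hsum_nn : 0 ≤ ∑ j ∈ Finset.Icc 1 n, (∑ i ∈ Finset.Icc 1 j, b i) * (z₀ ^ j - z₀ ^ (j+1)) :=
    Finset.sum_nonneg hterm_nn
  have htail_nn : 0 ≤ (∑ i ∈ Finset.Icc 1 n, b i) * z₀ ^ (n+1) := by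
    rcases Nat.eq_zero_or_pos n with h | h
    · simp [h]
    · exact mul_nonneg (hfnn n (Finset.mem_Icc.2 ⟨h, le_refl n⟩)) (pow_pos hz₀ _).le
  have hsum0 : ∑ j ∈ Finset.Icc 1 n, (∑ i ∈ Finset.Icc 1 j, b i) * (z₀ ^ j - z₀ ^ (j+1)) = 0 := by
    linarith
  have hf0 : ∀ j ∈ Finset.Icc 1 n, ∑ i ∈ Finset.Icc 1 j, b i = 0 := by
    intro j hj
    have := (Finset.sum_eq_zero_iff_of_nonneg hterm_nn).1 hsum0 j hj
    rcases mul_eq_zero.1 this with h | h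
    · exact h
    · exact absurd h (hcoef j).ne'
  intro i hi hin
  have hbi : b i = 0 := by
    rcases Nat.exists_eq_add_of_le hi with ⟨m, rfl⟩
    have h1 : ∑ x ∈ Finset.Icc 1 (1 + m), b x = 0 :=
      hf0 (1+m) (Finset.mem_Icc.2 ⟨by omega, hin⟩)
    rcases Nat.eq_zero_or_pos m with h | h
    · simpa [h] using h1
    · have h2 : ∑ x ∈ Finset.Icc 1 m, b x = 0 :=
        hf0 m (Finset.mem_Icc.2 ⟨h, by omega⟩)
      have h3 : (1 : ℕ) + m = m + 1 := by omega
      rw [h3, Finset.sum_Icc_succ_top (Nat.le_add_left 1 m), h2] at h1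
      rw [h3]
      linarith
  have : (weightCount C' i : ℝ) = (weightCount C i : ℝ) := by
    simp only [hb] at hbi; linarith
  exact_mod_cast this.symm
end

section
/- Let v ∈ F_q^k be a vector of full support, n ≥ k+1, and let E_{n,k,v} = {(x, x·v, 0, ..., 0) : x ∈ F_q^k} ⊆ F_q^n. Then for each i with 0 ≤ i ≤ n, the number of codewords of E_{n,k,v} of Hamming weight i equals (1/q)·C(k+1, i)·[(q-1)^i + (q-1)(-1)^i], where C(k+1,i) is the binomial coefficient. -/
open scoped Classical

/-! The map `x ↦ (x, x·v)` identifies `E_{n,k,v}`, weight for weight, with the kernel of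
the full-support functional `y ↦ y ⬝ᵥ (v, -1)` on `F^{k+1}`. For a full-support `w ∈ F^m`,
let `Z_m(i)` count the weight-`i` vectors of the kernel of `y ↦ y ⬝ᵥ w`. Split a vector of
`F^{m+1}` as `(a, z)`: if `a = 0`, then `z` lies in the smaller kernel; if `a ≠ 0`, then `z`
is any weight-`(i-1)` vector off the smaller kernel, and `a` is determined by `z`. Hence
`Z_{m+1}(i+1) + Z_m(i) = Z_m(i+1) + C(m,i)(q-1)^i`, and
`q Z_m(i) = C(m,i)((q-1)^i + (q-1)(-1)^i)` follows by induction on `m`. -/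

open Finset Matrix

section HammingWeight

variable {β : Type*}

theorem card_filter_fin_succ [Fintype β] {m : ℕ} (P : (Fin (m + 1) → β) → Prop)
    [DecidablePred P] :
    #{y | P y} = ∑ a, #{z : Fin m → β | P (Fin.cons a z)} := by
  simp only [card_filter]
  rw [← (Fin.consEquiv fun _ => β).sum_comp, Fintype.sum_prod_type]
  rfl

theorem card_filter_snoc [Fintype β] {k : ℕ} (g : (Fin k → β) → β)
    (P : (Fin (k + 1) → β) → Prop) [DecidablePred P] :
    #{x | P (Fin.snoc x (g x))} = #{y | P y ∧ y (Fin.last k) = g (Fin.init y)} := by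
  refine card_nbij' (fun x => Fin.snoc x (g x)) Fin.init ?_ ?_ ?_ ?_
  · intro x hx
    simpa using hx
  · intro y hy
    simp only [coe_filter, mem_univ, true_and, Set.mem_ofPred_eq] at hy ⊢
    rw [← hy.2, Fin.snoc_init_self]
    exact hy.1
  · intro x _
    simp
  · intro y hy
    simp only [coe_filter, mem_univ, true_and, Set.mem_ofPred_eq] at hy
    simp only [← hy.2, Fin.snoc_init_self]

variable [Zero β]

theorem hammingNorm_cons {m : ℕ} (a : β) (z : Fin m → β) :
    hammingNorm (Fin.cons a z : Fin (m + 1) → β) = (if a = 0 then 0 else 1) + hammingNorm z := by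
  simp only [hammingNorm, card_filter, Fin.sum_univ_succ, Fin.cons_zero, Fin.cons_succ, ne_eq,
    ite_not]

theorem hammingNorm_comp_of_forall_notMem_range {ι κ : Type*} [Fintype ι] [Fintype κ]
    (e : ι ↪ κ) {y : κ → β} (hy : ∀ j, j ∉ Set.range e → y j = 0) :
    hammingNorm (y ∘ e) = hammingNorm y := by
  rw [hammingNorm, hammingNorm, ← card_map e]
  congr 1
  ext j
  simp only [mem_map, mem_filter, mem_univ, true_and, Function.comp_apply]
  constructor
  · rintro ⟨i, hi, rfl⟩
    exact hi
  · intro hj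
    by_contra! h
    exact hj (hy j fun ⟨i, hi⟩ => h i (hi ▸ hj) hi)

theorem card_hammingNorm_eq [Fintype β] (m i : ℕ) :
    #{y : Fin m → β | hammingNorm y = i} = m.choose i * (Fintype.card β - 1) ^ i := by
  induction m generalizing i with
  | zero => cases i <;> simp [hammingNorm, filter_true_of_mem, filter_false_of_mem]
  | succ m ih =>
    cases i with
    | zero => simp [hammingNorm_eq_zero, filter_eq']
    | succ i =>
      have head_zero :
          #{z : Fin m → β | hammingNorm (Fin.cons 0 z : Fin (m + 1) → β) = i + 1} =
            #{z : Fin m → β | hammingNorm z = i + 1} := by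
        simp [hammingNorm_cons]
      have head_ne_zero : ∀ a ∈ ({0}ᶜ : Finset β),
          #{z : Fin m → β | hammingNorm (Fin.cons a z : Fin (m + 1) → β) = i + 1} =
            #{z : Fin m → β | hammingNorm z = i} := by
        intro a ha
        simp [hammingNorm_cons, (by simpa using ha : a ≠ 0), add_comm 1]
      rw [card_filter_fin_succ, Fintype.sum_eq_add_sum_compl 0, head_zero,
        sum_congr rfl head_ne_zero, sum_const, card_compl, card_singleton, ih, ih, smul_eq_mul,
        Nat.choose_succ_succ]
      ring

end HammingWeight

section KernelWeight

variable {F : Type*} [Field F] [Fintype F]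

theorem card_hammingNorm_succ_and_dotProduct_eq_zero_add {m i : ℕ} {w : Fin (m + 1) → F}
    (hw : w 0 ≠ 0) :
    #{y : Fin (m + 1) → F | hammingNorm y = i + 1 ∧ y ⬝ᵥ w = 0} +
        #{z : Fin m → F | hammingNorm z = i ∧ z ⬝ᵥ Fin.tail w = 0} =
      #{z : Fin m → F | hammingNorm z = i + 1 ∧ z ⬝ᵥ Fin.tail w = 0} +
        #{z : Fin m → F | hammingNorm z = i} := by
  set head : (Fin m → F) → F := fun z => -(z ⬝ᵥ Fin.tail w) / w 0
  have cons_mem_kernel (a : F) (z : Fin m → F) :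
      (Fin.cons a z : Fin (m + 1) → F) ⬝ᵥ w = 0 ↔ head z = a := by
    have : (Fin.cons a z : Fin (m + 1) → F) ⬝ᵥ w = a * w 0 + z ⬝ᵥ Fin.tail w :=
      cons_dotProduct a z w
    rw [this, eq_comm (a := head z), eq_div_iff hw, eq_neg_iff_add_eq_zero]
  have head_eq_zero (z : Fin m → F) : head z = 0 ↔ z ⬝ᵥ Fin.tail w = 0 := by
    simp [head, hw]
  have fiber_ne_zero : ∀ a ∈ ({0}ᶜ : Finset F),
      #{z : Fin m → F | hammingNorm (Fin.cons a z : Fin (m + 1) → F) = i + 1 ∧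
        (Fin.cons a z : Fin (m + 1) → F) ⬝ᵥ w = 0} =
      #{z : Fin m → F | hammingNorm z = i ∧ head z = a} := by
    intro a ha
    simp [hammingNorm_cons, (by simpa using ha : a ≠ 0), add_comm 1, cons_mem_kernel]
  have card_eq_sum_fiber : #{z : Fin m → F | hammingNorm z = i} =
      ∑ a, #{z : Fin m → F | hammingNorm z = i ∧ head z = a} := by
    rw [card_eq_sum_card_fiberwise (t := univ) (f := head) (by simp)]
    simp only [filter_filter]
  rw [card_filter_fin_succ, Fintype.sum_eq_add_sum_compl 0, sum_congr rfl fiber_ne_zero,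
    card_eq_sum_fiber, Fintype.sum_eq_add_sum_compl 0]
  simp only [hammingNorm_cons, ↓reduceIte, zero_add, cons_mem_kernel, head_eq_zero]
  ring

theorem card_hammingNorm_eq_and_dotProduct_eq_zero {m : ℕ} {w : Fin m → F}
    (hw : ∀ j, w j ≠ 0) (i : ℕ) :
    (Fintype.card F : ℤ) * #{y : Fin m → F | hammingNorm y = i ∧ y ⬝ᵥ w = 0} =
      m.choose i *
        (((Fintype.card F : ℤ) - 1) ^ i + ((Fintype.card F : ℤ) - 1) * (-1) ^ i) := by
  induction m generalizing i with
  | zero => cases i <;> simp [hammingNorm, filter_true_of_mem, filter_false_of_mem]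
  | succ m ih =>
    cases i with
    | zero =>
      rw [card_eq_one.2 ⟨0, by ext y; simp +contextual [hammingNorm_eq_zero]⟩]
      simp
    | succ i =>
      have hw' : ∀ j, Fin.tail w j ≠ 0 := fun j => hw j.succ
      have recurrence := congrArg (Nat.cast (R := ℤ))
        (card_hammingNorm_succ_and_dotProduct_eq_zero_add (i := i) (hw 0))
      have total := congrArg (Nat.cast (R := ℤ)) (card_hammingNorm_eq (β := F) m i)
      push_cast [Nat.cast_sub Fintype.card_pos] at recurrence total
      rw [Nat.choose_succ_succ, Nat.cast_add]
      linear_combination (Fintype.card F : ℤ) * recurrence + (Fintype.card F : ℤ) * total +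
        ih hw' (i + 1) - ih hw' i

end KernelWeight

theorem dotProduct_snoc {R : Type*} [NonUnitalNonAssocSemiring R] {k : ℕ} (y : Fin (k + 1) → R)
    (v : Fin k → R) (c : R) :
    y ⬝ᵥ Fin.snoc v c = Fin.init y ⬝ᵥ v + y (Fin.last k) * c := by
  simp [dotProduct, Fin.sum_univ_castSucc, Fin.init]

theorem weightCount_range_of_injective {F M : Type*} [Field F] [Fintype F] [AddCommGroup M]
    [Module F M] [Fintype M] {n : ℕ} {f : M →ₗ[F] Fin n → F} (hf : Function.Injective f)
    (i : ℕ) :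
    weightCount (LinearMap.range f) i = #{x | hammingNorm (f x) = i} :=
  (card_equiv (LinearEquiv.ofInjective f hf).toEquiv (by simp)).symm

section Emap

variable {F : Type*} [Field F] {n k : ℕ} (v : Fin k → F)

theorem Emap_injective (hkn : k ≤ n) : Function.Injective (Emap F n k v) := by
  intro x y hxy
  funext j
  simpa [Emap] using congrFun hxy (Fin.castLE hkn j)

theorem Emap_comp_castLE (hkn : k + 1 ≤ n) (x : Fin k → F) :
    Emap F n k v x ∘ Fin.castLE hkn = Fin.snoc x (x ⬝ᵥ v) := by
  funext j
  induction j using Fin.lastCases <;> simp [Emap, dotProduct]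

theorem Emap_apply_of_le (x : Fin k → F) {j : Fin n} (hj : k + 1 ≤ j) :
    Emap F n k v x j = 0 := by
  simp [Emap, show ¬(j : ℕ) < k by omega, show (j : ℕ) ≠ k by omega]

theorem hammingNorm_Emap (hkn : k + 1 ≤ n) (x : Fin k → F) :
    hammingNorm (Emap F n k v x) = hammingNorm (Fin.snoc x (x ⬝ᵥ v) : Fin (k + 1) → F) := by
  rw [← Emap_comp_castLE v hkn, ← Fin.coe_castLEEmb,
    hammingNorm_comp_of_forall_notMem_range]
  intro j hj
  apply Emap_apply_of_le
  simpa [Fin.range_castLE] using hj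

theorem weightCount_Ecode_eq_card_kernel [Fintype F] (hkn : k + 1 ≤ n) (i : ℕ) :
    weightCount (Ecode F n k v) i =
      #{y : Fin (k + 1) → F | hammingNorm y = i ∧ y ⬝ᵥ Fin.snoc v (-1) = 0} := by
  rw [Ecode, weightCount_range_of_injective (Emap_injective v (by omega))]
  simp_rw [hammingNorm_Emap v hkn]
  rw [card_filter_snoc (· ⬝ᵥ v) (hammingNorm · = i)]
  congr 1
  ext y
  rw [mem_filter, mem_filter, dotProduct_snoc, mul_neg_one, ← sub_eq_add_neg, sub_eq_zero,
    eq_comm (a := Fin.init y ⬝ᵥ v)]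

end Emap

/-- The weight distribution of `E_{n,k,v}` for `v` of full support:
`A_i(E_{n,k,v}) = (1/q)·C(k+1,i)·[(q-1)^i + (q-1)(-1)^i]`. -/
theorem weightCount_Ecode {F : Type*} [Field F] [Fintype F] {n k q : ℕ}
    (hq : Fintype.card F = q) (hkn : k + 1 ≤ n)
    (v : Fin k → F) (hv : ∀ j, v j ≠ 0) :
    ∀ i : ℕ, i ≤ n →
      (weightCount (Ecode F n k v) i : ℝ) =
        (1 / (q : ℝ)) * (Nat.choose (k + 1) i : ℝ) *
          (((q : ℝ) - 1) ^ i + ((q : ℝ) - 1) * (-1 : ℝ) ^ i) := by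
  subst hq
  intro i _
  have snoc_full_support : ∀ j, (Fin.snoc v (-1) : Fin (k + 1) → F) j ≠ 0 := by
    intro j
    induction j using Fin.lastCases <;> simp [hv]
  have count : (Fintype.card F : ℝ) * (weightCount (Ecode F n k v) i : ℝ) =
      (k + 1).choose i *
        (((Fintype.card F : ℝ) - 1) ^ i + ((Fintype.card F : ℝ) - 1) * (-1) ^ i) := by
    rw [weightCount_Ecode_eq_card_kernel v hkn]
    exact_mod_cast card_hammingNorm_eq_and_dotProduct_eq_zero snoc_full_support i
  field_simp
  linear_combination count
end

section
/- If C is a linear [n,k;q] code with minimum distance at least 2, then for all z ∈ [0,1], A_C(z) ≤ g(z), where g(z) = (1+(q-1)z)^k + k(q-1)(z^2 - z). -/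
/-!
Restricting to an information set `s` of `k` coordinates embeds `C` into `F^s` without
increasing weights. A codeword whose restriction has weight one is nonzero, hence has weight at
least two, so `A_C(z)` is bounded by the weight enumerator `(1 + (q - 1) z)^k` of `F^s` in which
the weight-one words are charged `z^2` instead of `z`. There are at least `k (q - 1)` of them,
and `z^2 - z ≤ 0` on `[0, 1]`.
-/

open scoped Classical

open Finset

lemma Submodule.exists_card_eq_finrank_restrict_injective {K ι : Type*} [Field K] [Fintype ι]
    (C : Submodule K (ι → K)) :
    ∃ s : Finset ι, #s = Module.finrank K C ∧
      Function.Injective fun (c : C) (i : s) => (c : ι → K) i := by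
  set φ : ι → Module.Dual K C := fun i => (LinearMap.proj i).comp C.subtype
  have hφ : Submodule.span K (Set.range φ) = ⊤ := by
    have : φ = C.subtype.dualMap ∘ (Pi.basisFun K ι).dualBasis := by
      ext i c; simp [φ]
    rw [this, Set.range_comp, ← Submodule.map_span, Module.Basis.span_eq, Submodule.map_top,
      LinearMap.range_eq_top]
    exact LinearMap.dualMap_surjective_of_injective C.injective_subtype
  obtain ⟨κ, a, ha, hspan, hli⟩ := exists_linearIndependent' K φ
  rw [hφ] at hspan
  have : Fintype κ := Fintype.ofInjective a ha
  refine ⟨univ.map ⟨a, ha⟩, ?_, fun c c' h => ?_⟩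
  · rw [card_map, card_univ, ← Subspace.dual_finrank_eq, ← finrank_span_eq_card hli, hspan,
      finrank_top]
  · have : Module.Dual.eval K C (c - c') = 0 := LinearMap.ext_on_range hspan fun j => by
      simpa [φ, sub_eq_zero] using congrFun h ⟨a j, Finset.mem_map_of_mem _ (mem_univ j)⟩
    exact sub_eq_zero.mp ((Module.eval_apply_eq_zero_iff K _).mp this)

lemma Fintype.sum_comp_le_sum_of_injective {α β M : Type*} [Fintype α] [Fintype β]
    [AddCommMonoid M] [PartialOrder M] [IsOrderedAddMonoid M] {p : α → β}
    (hp : Function.Injective p) {f : β → M} (hf : ∀ b, 0 ≤ f b) :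
    ∑ a, f (p a) ≤ ∑ b, f b := by
  rw [← sum_image (f := f) fun a _ a' _ h => hp h]
  exact sum_le_sum_of_subset_of_nonneg (subset_univ _) fun b _ _ => hf b

lemma hammingNorm_comp_le_of_injective {ι κ F : Type*} [Fintype ι] [Fintype κ] [Zero F]
    [DecidableEq F] {a : κ → ι} (ha : Function.Injective a) (v : ι → F) :
    hammingNorm (v ∘ a) ≤ hammingNorm v :=
  card_le_card_of_injOn a (fun i hi => by simpa using hi) ha.injOn

section hammingNorm

variable {ι F : Type*} [Fintype ι] [DecidableEq ι] [Fintype F] [Zero F] [DecidableEq F]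

lemma sum_pow_hammingNorm_s18 {R : Type*} [CommRing R] (z : R) :
    ∑ v : ι → F, z ^ hammingNorm v = (1 + ((Fintype.card F : R) - 1) * z) ^ Fintype.card ι := by
  have hprod (v : ι → F) : z ^ hammingNorm v = ∏ i, if v i ≠ 0 then z else 1 := by
    rw [hammingNorm, ← prod_const, prod_filter]
  have hfactor : ∑ a : F, (if a ≠ 0 then z else 1) = 1 + ((Fintype.card F : R) - 1) * z := by
    rw [Fintype.sum_eq_add_sum_compl 0, if_neg (not_not.2 rfl),
      sum_congr rfl fun a ha => if_pos (by simpa using ha), sum_const, card_compl, card_singleton,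
      nsmul_eq_mul, Nat.cast_pred Fintype.card_pos]
  simp_rw [hprod, ← Fintype.prod_sum (fun (_ : ι) (a : F) => if a ≠ 0 then z else 1), hfactor,
    prod_const, card_univ]

lemma card_mul_card_sub_one_le_card_hammingNorm_eq_one :
    Fintype.card ι * (Fintype.card F - 1) ≤ #{v : ι → F | hammingNorm v = 1} := by
  calc Fintype.card ι * (Fintype.card F - 1) = Fintype.card (ι × {a : F // a ≠ 0}) := by
        simp [Fintype.card_subtype_compl]
    _ ≤ _ := by
      refine card_le_card_of_injOn (fun p => Pi.single p.1 p.2) (fun p _ => ?_) ?_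
      · simp only [mem_coe, mem_filter, mem_univ, true_and, hammingNorm, card_eq_one]
        exact ⟨p.1, by ext; simp [Pi.single_apply, p.2.2]⟩
      · rintro ⟨i, a, ha⟩ - ⟨j, b, hb⟩ - h
        obtain rfl : i = j := by_contra fun hne => ha (by simpa [hne] using congrFun h i)
        simpa using congrFun h i

lemma sum_pow_ite_hammingNorm_eq_one_le {R : Type*} [CommRing R] [LinearOrder R]
    [IsStrictOrderedRing R] {z : R} (hz₀ : 0 ≤ z) (hz₁ : z ≤ 1) :
    ∑ v : ι → F, z ^ (if hammingNorm v = 1 then 2 else hammingNorm v) ≤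
      (1 + ((Fintype.card F : R) - 1) * z) ^ Fintype.card ι +
        Fintype.card ι * ((Fintype.card F : R) - 1) * (z ^ 2 - z) := by
  have hsplit (v : ι → F) : z ^ (if hammingNorm v = 1 then 2 else hammingNorm v) =
      z ^ hammingNorm v + if hammingNorm v = 1 then z ^ 2 - z else 0 := by
    split_ifs with h <;> simp [h]
  have hcount : (Fintype.card ι : R) * ((Fintype.card F : R) - 1) ≤
      #{v : ι → F | hammingNorm v = 1} := by
    rw [← Nat.cast_pred Fintype.card_pos]
    exact_mod_cast card_mul_card_sub_one_le_card_hammingNorm_eq_one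
  have hz : z ^ 2 - z ≤ 0 := by nlinarith
  rw [sum_congr rfl fun v _ => hsplit v, sum_add_distrib, ← sum_filter, sum_const, nsmul_eq_mul,
    sum_pow_hammingNorm_s18]
  linarith [mul_le_mul_of_nonpos_right hcount hz]

end hammingNorm

theorem weightEnum_le_old_bound_general {F : Type*} [Field F] [Fintype F] {n k q : ℕ}
    (hq : Fintype.card F = q)
    (C : Submodule F (Fin n → F)) (hdim : Module.finrank F C = k)
    (hmin : ∀ c ∈ C, c ≠ 0 → 2 ≤ hammingNorm c) :
    ∀ z : ℝ, 0 ≤ z → z ≤ 1 →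
      weightEnum C z ≤
        (1 + ((q : ℝ) - 1) * z) ^ k + (k : ℝ) * ((q : ℝ) - 1) * (z ^ 2 - z) := by
  intro z hz₀ hz₁
  obtain ⟨s, hs, hinj⟩ := C.exists_card_eq_finrank_restrict_injective
  set p := fun (c : C) (i : s) => (c : Fin n → F) i
  set w : (s → F) → ℕ := fun v => if hammingNorm v = 1 then 2 else hammingNorm v
  have hw (c : C) : w (p c) ≤ hammingNorm (c : Fin n → F) := by
    simp only [w]
    split_ifs with h
    · exact hmin c c.2 fun hc => by simp [p, hc, hammingNorm] at h
    · exact hammingNorm_comp_le_of_injective Subtype.val_injective _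
  calc weightEnum C z ≤ ∑ c : C, z ^ w (p c) :=
        sum_le_sum fun c _ => pow_le_pow_of_le_one hz₀ hz₁ (hw c)
    _ ≤ ∑ v : s → F, z ^ w v :=
        Fintype.sum_comp_le_sum_of_injective (f := fun v => z ^ w v) hinj fun v => by positivity
    _ ≤ _ := by
        have := sum_pow_ite_hammingNorm_eq_one_le (ι := s) (F := F) hz₀ hz₁
        rwa [hq, Fintype.card_coe, hs, hdim] at this

/-- If `C` is an `[n,k;q]` code with minimum distance at least 2, then for all
`z ∈ [0,1]`, `A_C(z) ≤ (1+(q-1)z)^k + k(q-1)(z² - z)`. -/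
theorem weightEnum_le_old_bound {F : Type*} [Field F] [Fintype F] {n k q : ℕ}
    (hq : Fintype.card F = q) (hk : 1 ≤ k) (hkn : k ≤ n)
    (C : Submodule F (Fin n → F)) (hdim : Module.finrank F C = k)
    (hmin : ∀ c ∈ C, c ≠ 0 → 2 ≤ hammingNorm c) :
    ∀ z : ℝ, 0 ≤ z → z ≤ 1 →
      weightEnum C z ≤
        (1 + ((q : ℝ) - 1) * z) ^ k + (k : ℝ) * ((q : ℝ) - 1) * (z ^ 2 - z) :=
  weightEnum_le_old_bound_general hq C hdim hmin
end

section
/- For all integers q ≥ 2, k ≥ 1, and all real z, g(z) - f(z) = ((q-1)/q)·(1-z)·Σ_{j=2}^k C(k,j)·[(q-1)^j - (-1)^j]·z^j, where g(z) = (1+(q-1)z)^k + k(q-1)(z^2-z) and f(z) = (1/q)[(1+(q-1)z)^{k+1} + (q-1)(1-z)^{k+1}]. Consequently, g(z) > f(z) for all z ∈ (0,1) except when k = 1 or when q = k = 2 (in which cases g = f identically). -/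
lemma sum_key (a z : ℝ) (k : ℕ) (hk : 1 ≤ k) :
    ∑ j ∈ Finset.Icc 2 k, (Nat.choose k j : ℝ) * (a ^ j - (-1 : ℝ) ^ j) * z ^ j
      = (1 + a * z) ^ k - (1 - z) ^ k - (k : ℝ) * (a + 1) * z := by
  have h1 : (1 + a * z) ^ k
      = ∑ j ∈ Finset.range (k + 1), (Nat.choose k j : ℝ) * a ^ j * z ^ j := by
    rw [add_comm, add_pow]
    refine Finset.sum_congr rfl fun j _ => ?_
    rw [mul_pow]; ring
  have h2 : (1 - z) ^ k
      = ∑ j ∈ Finset.range (k + 1), (Nat.choose k j : ℝ) * (-1 : ℝ) ^ j * z ^ j := by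
    have : (1 - z) = (-z) + 1 := by ring
    rw [this, add_pow]
    refine Finset.sum_congr rfl fun j _ => ?_
    rw [neg_pow]; ring
  have h3 : ∑ j ∈ Finset.range (k + 1),
      (Nat.choose k j : ℝ) * (a ^ j - (-1 : ℝ) ^ j) * z ^ j
      = (1 + a * z) ^ k - (1 - z) ^ k := by
    rw [h1, h2, ← Finset.sum_sub_distrib]
    exact Finset.sum_congr rfl fun j _ => by ring
  have hsplit := Finset.sum_Ico_consecutive
    (f := fun j => (Nat.choose k j : ℝ) * (a ^ j - (-1 : ℝ) ^ j) * z ^ j)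
    (by norm_num : 0 ≤ 2) (by omega : 2 ≤ k + 1)
  have hIcc : Finset.Icc 2 k = Finset.Ico 2 (k + 1) := by
    rw [Finset.Ico_add_one_right_eq_Icc]
  have hrange : Finset.range (k + 1) = Finset.Ico 0 (k + 1) := by
    rw [Finset.range_eq_Ico]
  have h02 : ∑ j ∈ Finset.Ico 0 2,
      (Nat.choose k j : ℝ) * (a ^ j - (-1 : ℝ) ^ j) * z ^ j
      = (k : ℝ) * (a + 1) * z := by
    have : Finset.Ico 0 2 = {0, 1} := by decide
    rw [this]
    simp [Finset.sum_insert, Nat.choose_one_right]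
  rw [hIcc]
  have h4 := hsplit
  rw [h02] at h4
  rw [hrange] at h3
  linarith [h3, h4]

/-- Comparison of the two bounds `g(z) = (1+(q-1)z)^k + k(q-1)(z²-z)` and
`f(z) = (1/q)[(1+(q-1)z)^{k+1} + (q-1)(1-z)^{k+1}]`:
the identity `g(z) - f(z) = ((q-1)/q)(1-z)·Σ_{j=2}^k C(k,j)[(q-1)^j - (-1)^j] z^j`
holds for all real `z`; consequently `g(z) > f(z)` on `(0,1)` except when `k = 1`
or `q = k = 2`, in which cases `g = f` identically. -/
theorem old_bound_sub_new_bound (q k : ℕ) (hq : 2 ≤ q) (hk : 1 ≤ k) :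
    (∀ z : ℝ,
      ((1 + ((q : ℝ) - 1) * z) ^ k + (k : ℝ) * ((q : ℝ) - 1) * (z ^ 2 - z)) -
        (1 / (q : ℝ)) * ((1 + ((q : ℝ) - 1) * z) ^ (k + 1)
          + ((q : ℝ) - 1) * (1 - z) ^ (k + 1)) =
      (((q : ℝ) - 1) / (q : ℝ)) * (1 - z) *
        ∑ j ∈ Finset.Icc 2 k, (Nat.choose k j : ℝ) *
          (((q : ℝ) - 1) ^ j - (-1 : ℝ) ^ j) * z ^ j) ∧
    (¬ (k = 1 ∨ (q = 2 ∧ k = 2)) →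
      ∀ z : ℝ, 0 < z → z < 1 →
        (1 + ((q : ℝ) - 1) * z) ^ k + (k : ℝ) * ((q : ℝ) - 1) * (z ^ 2 - z) >
          (1 / (q : ℝ)) * ((1 + ((q : ℝ) - 1) * z) ^ (k + 1)
            + ((q : ℝ) - 1) * (1 - z) ^ (k + 1))) ∧
    ((k = 1 ∨ (q = 2 ∧ k = 2)) →
      ∀ z : ℝ,
        (1 + ((q : ℝ) - 1) * z) ^ k + (k : ℝ) * ((q : ℝ) - 1) * (z ^ 2 - z) =
          (1 / (q : ℝ)) * ((1 + ((q : ℝ) - 1) * z) ^ (k + 1)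
            + ((q : ℝ) - 1) * (1 - z) ^ (k + 1))) := by
  have hq0 : (q : ℝ) ≠ 0 := by positivity
  have hq1 : (1 : ℝ) ≤ (q : ℝ) - 1 := by
    have : (2 : ℝ) ≤ (q : ℝ) := by exact_mod_cast hq
    linarith
  have hid : ∀ z : ℝ,
      ((1 + ((q : ℝ) - 1) * z) ^ k + (k : ℝ) * ((q : ℝ) - 1) * (z ^ 2 - z)) -
        (1 / (q : ℝ)) * ((1 + ((q : ℝ) - 1) * z) ^ (k + 1)
          + ((q : ℝ) - 1) * (1 - z) ^ (k + 1)) =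
      (((q : ℝ) - 1) / (q : ℝ)) * (1 - z) *
        ∑ j ∈ Finset.Icc 2 k, (Nat.choose k j : ℝ) *
          (((q : ℝ) - 1) ^ j - (-1 : ℝ) ^ j) * z ^ j := by
    intro z
    rw [sum_key ((q : ℝ) - 1) z k hk]
    field_simp
    ring
  refine ⟨hid, ?_, ?_⟩
  · intro hne z hz0 hz1
    push_neg at hne
    obtain ⟨hk1, hqk⟩ := hne
    have hk2 : 2 ≤ k := by omega
    rw [gt_iff_lt, ← sub_pos, hid z]
    have hsum : 0 < ∑ j ∈ Finset.Icc 2 k, (Nat.choose k j : ℝ) *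
        (((q : ℝ) - 1) ^ j - (-1 : ℝ) ^ j) * z ^ j := by
      apply Finset.sum_pos'
      · intro j hj
        have h1 : (1 : ℝ) ≤ ((q : ℝ) - 1) ^ j := one_le_pow₀ hq1
        have h2 : (-1 : ℝ) ^ j ≤ 1 := by
          rcases Nat.even_or_odd j with he | ho
          · rw [he.neg_one_pow]
          · rw [ho.neg_one_pow]; norm_num
        have hc : (0 : ℝ) ≤ (Nat.choose k j : ℝ) := Nat.cast_nonneg _
        have hz : (0 : ℝ) ≤ z ^ j := by positivity
        apply mul_nonneg (mul_nonneg hc (by linarith)) hz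
      · rcases Nat.lt_or_ge q 3 with hq3 | hq3
        · -- q = 2, so k ≥ 3, use j = 3
          have hq2 : q = 2 := by omega
          have hk3 : 3 ≤ k := by omega
          refine ⟨3, Finset.mem_Icc.mpr ⟨by omega, hk3⟩, ?_⟩
          have hc : 0 < (Nat.choose k 3 : ℝ) := by
            exact_mod_cast Nat.choose_pos hk3
          have : ((q : ℝ) - 1) ^ 3 - (-1 : ℝ) ^ 3 = 2 := by
            rw [hq2]; norm_num
          rw [this]
          positivity
        · -- q ≥ 3, use j = 2
          refine ⟨2, Finset.mem_Icc.mpr ⟨le_refl 2, hk2⟩, ?_⟩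
          have hc : 0 < (Nat.choose k 2 : ℝ) := by
            exact_mod_cast Nat.choose_pos hk2
          have hq3' : (2 : ℝ) ≤ (q : ℝ) - 1 := by
            have : (3 : ℝ) ≤ (q : ℝ) := by exact_mod_cast hq3
            linarith
          have : 0 < ((q : ℝ) - 1) ^ 2 - (-1 : ℝ) ^ 2 := by nlinarith
          positivity
    have hfrac : 0 < ((q : ℝ) - 1) / (q : ℝ) := by positivity
    have h1z : 0 < 1 - z := by linarith
    positivity
  · intro hcase z
    rw [← sub_eq_zero, hid z]
    rcases hcase with hk1 | ⟨hq2, hk2⟩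
    · subst hk1; simp
    · subst hq2; subst hk2
      norm_num [Finset.Icc_self]
end
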